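/- arXiv:0909.4887 — 9 statements merged into one kernel-verified Lean document; each statement's English description precedes it below -/
import Mathlib

section
/- If n point masses with positive masses at pairwise distinct positions in ℝ³ form a central configuration, then for all pairwise distinct indices i, j, h one has ∑_{k ∉ {i,j,h}} m_k (R_{ik} − R_{jk}) Δ_{ijhk} = 0, where Δ_{ijhk} = det(qᵢ − qⱼ, qⱼ − q_h, q_h − q_k). -/
noncomputable section

open Finset

/-- Euclidean 3-space. -/
abbrev E3 : Type := EuclideanSpace ℝ (Fin 3)

/-- Determinant of three vectors in `ℝ³`. -/
def det3 (u v w : E3) : ℝ :=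
  Matrix.det !![u 0, u 1, u 2; v 0, v 1, v 2; w 0, w 1, w 2]

/-- The oriented volume `Δ_{ijhk} = det(qᵢ − qⱼ, qⱼ − q_h, q_h − q_k)`
(0-based indices: body `i+1` of the paper is index `i`). -/
def Delta {n : ℕ} (q : Fin n → E3) (i j h k : Fin n) : ℝ :=
  det3 (q i - q j) (q j - q h) (q h - q k)

/-- The unsigned volume `D_{ijhk} = |Δ_{ijhk}|`. -/
def Dvol {n : ℕ} (q : Fin n → E3) (i j h k : Fin n) : ℝ := |Delta q i j h k|

/-- `R_{ij} = ‖qᵢ − qⱼ‖⁻³`. -/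
def Rinv {n d : ℕ} (q : Fin n → EuclideanSpace ℝ (Fin d)) (i j : Fin n) : ℝ :=
  (‖q i - q j‖ ^ 3)⁻¹

/-- The `n` bodies with masses `m` at positions `q` in `ℝ^d` form a central configuration:
there is `λ ∈ ℝ` with `∑_{k ≠ i} m_k R_{ik} (qᵢ − q_k) = λ (qᵢ − q_G)` for every `i`,
where `q_G` is the center of mass. -/
def IsCentralConfig {n d : ℕ} (m : Fin n → ℝ) (q : Fin n → EuclideanSpace ℝ (Fin d)) : Prop :=
  ∃ lam : ℝ, ∀ i : Fin n,
    ∑ k ∈ Finset.univ.erase i, (m k * Rinv q i k) • (q i - q k)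
      = lam • (q i - (∑ j, m j)⁻¹ • ∑ j, m j • q j)

/-- Seven points in `ℝ³` (0-based indices) form a symmetric configuration:
`r₁₂=r₁₃=r₂₃=r₁₄=r₂₄=r₃₄=1`, `r₁₅=r₂₆=r₃₇`, `r₄₅=r₄₆=r₄₇`, `r₅₆=r₆₇=r₅₇`,
`r₁₆=r₁₇=r₂₅=r₂₇=r₃₅=r₃₆`, and there is a rotation (isometry) of order 3 mapping
`q₁→q₂→q₃→q₁`, `q₅→q₆→q₇→q₅` and fixing `q₄`. -/
def IsSymmetricConfig (q : Fin 7 → E3) : Prop :=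
  dist (q 0) (q 1) = 1 ∧ dist (q 0) (q 2) = 1 ∧ dist (q 1) (q 2) = 1 ∧
  dist (q 0) (q 3) = 1 ∧ dist (q 1) (q 3) = 1 ∧ dist (q 2) (q 3) = 1 ∧
  dist (q 0) (q 4) = dist (q 1) (q 5) ∧ dist (q 1) (q 5) = dist (q 2) (q 6) ∧
  dist (q 3) (q 4) = dist (q 3) (q 5) ∧ dist (q 3) (q 5) = dist (q 3) (q 6) ∧
  dist (q 4) (q 5) = dist (q 5) (q 6) ∧ dist (q 5) (q 6) = dist (q 4) (q 6) ∧
  dist (q 0) (q 5) = dist (q 0) (q 6) ∧ dist (q 0) (q 6) = dist (q 1) (q 4) ∧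
  dist (q 1) (q 4) = dist (q 1) (q 6) ∧ dist (q 1) (q 6) = dist (q 2) (q 4) ∧
  dist (q 2) (q 4) = dist (q 2) (q 5) ∧
  ∃ ρ : E3 ≃ᵢ E3, ρ.trans (ρ.trans ρ) = IsometryEquiv.refl E3 ∧
    ρ (q 0) = q 1 ∧ ρ (q 1) = q 2 ∧ ρ (q 2) = q 0 ∧
    ρ (q 4) = q 5 ∧ ρ (q 5) = q 6 ∧ ρ (q 6) = q 4 ∧ ρ (q 3) = q 3

/-- `H = (R₁₅ − R₄₅) D₁₄₅₆ − (R₄₅ − R₁₆) D₁₄₆₇`. -/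
def Hval (q : Fin 7 → E3) : ℝ :=
  (Rinv q 0 4 - Rinv q 3 4) * Dvol q 0 3 4 5 - (Rinv q 3 4 - Rinv q 0 5) * Dvol q 0 3 5 6

/-- A symmetric configuration is in `Ω` if `r₁₅ ∈ (0, √6/4)`, `Δ₁₄₅₇ ≤ 0` and
`1 > r₁₆ > r₄₅ > r₁₅`. -/
def InOmega (q : Fin 7 → E3) : Prop :=
  IsSymmetricConfig q ∧
  0 < dist (q 0) (q 4) ∧ dist (q 0) (q 4) < Real.sqrt 6 / 4 ∧
  Delta q 0 3 4 6 ≤ 0 ∧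
  dist (q 0) (q 5) < 1 ∧ dist (q 3) (q 4) < dist (q 0) (q 5) ∧
  dist (q 0) (q 4) < dist (q 3) (q 4)

/-- `Ω_H` is the subset of `Ω` where `H = 0`. -/
def InOmegaH (q : Fin 7 → E3) : Prop := InOmega q ∧ Hval q = 0

/-- `f_{ijh} = ∑_{k ∉ {i,j,h}} m_k (R_{ik} − R_{jk}) Δ_{ijhk}`. -/
def fval (m : Fin 7 → ℝ) (q : Fin 7 → E3) (i j h : Fin 7) : ℝ :=
  ∑ k ∈ Finset.univ \ {i, j, h}, m k * (Rinv q i k - Rinv q j k) * Delta q i j h k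

/-- `g(s₁₅, s₁₆, s₄₅)`. -/
def gfun (s15 s16 s45 : ℝ) : ℝ :=
  -3 + 2*s15 - 3*s15^2 + 4*s16 + 4*s15*s16 - 4*s16^2 + 2*s45 + 2*s15*s45 + 4*s16*s45 - 3*s45^2

/-- Area of the triangle with vertices `a`, `b`, `c` in `ℝ³`, via the cross product. -/
def triArea (a b c : E3) : ℝ :=
  ‖(WithLp.equiv 2 (Fin 3 → ℝ)).symm
    (crossProduct ((WithLp.equiv 2 (Fin 3 → ℝ)) (b - a)) ((WithLp.equiv 2 (Fin 3 → ℝ)) (c - a)))‖ / 2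

/-! Apply a linear functional `φ` with `φ (qᵢ - qⱼ) = 0` to the central-configuration equations
of bodies `i` and `j`: the right-hand sides `λ φ (qᵢ - q_G)` and `λ φ (qⱼ - q_G)` coincide, hence so
do the left-hand sides. For `φ = det(qᵢ - qⱼ, qⱼ - q_h, ·)` both `φ (qᵢ - q_k)` and `φ (qⱼ - q_k)`
equal `Δ_{ijhk}`, which vanishes for `k ∈ {i, j, h}`. -/

theorem IsCentralConfig.sum_mul_Rinv_apply_eq {n d : ℕ} {m : Fin n → ℝ}
    {q : Fin n → EuclideanSpace ℝ (Fin d)} (hcc : IsCentralConfig m q)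
    (φ : EuclideanSpace ℝ (Fin d) →ₗ[ℝ] ℝ) {i j : Fin n} (hφ : φ (q i - q j) = 0) :
    ∑ k, m k * Rinv q i k * φ (q i - q k) = ∑ k, m k * Rinv q j k * φ (q j - q k) := by
  obtain ⟨lam, hlam⟩ := hcc
  have hφ_cc (a : Fin n) :
      ∑ k, m k * Rinv q a k * φ (q a - q k) = lam * φ (q a - (∑ l, m l)⁻¹ • ∑ l, m l • q l) := by
    rw [← Finset.sum_erase (a := a) _ (by simp), ← smul_eq_mul lam, ← map_smul, ← hlam a, map_sum]
    simp only [map_smul, smul_eq_mul]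
  rw [hφ_cc, hφ_cc, ← sub_eq_zero, ← mul_sub, ← map_sub, sub_sub_sub_cancel_right, hφ, mul_zero]

theorem det3_add_right (u v w w' : E3) : det3 u v (w + w') = det3 u v w + det3 u v w' := by
  simp [det3, Matrix.det_fin_three]
  ring

theorem det3_smul_right (u v w : E3) (c : ℝ) : det3 u v (c • w) = c * det3 u v w := by
  simp [det3, Matrix.det_fin_three]
  ring

theorem det3_self_left (u v : E3) : det3 u v u = 0 := by
  simp [det3, Matrix.det_fin_three]
  ring

theorem det3_self_mid (u v : E3) : det3 u v v = 0 := by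
  simp [det3, Matrix.det_fin_three]
  ring

def det3Right (u v : E3) : E3 →ₗ[ℝ] ℝ where
  toFun := det3 u v
  map_add' := det3_add_right u v
  map_smul' c w := det3_smul_right u v w c

@[simp] theorem det3Right_apply (u v w : E3) : det3Right u v w = det3 u v w := rfl

section Delta

variable {n : ℕ} (q : Fin n → E3) (i j h k : Fin n)

theorem Delta_eq_det3_sub_left :
    Delta q i j h k = det3 (q i - q j) (q j - q h) (q i - q k) := by
  have hsplit : q i - q k = (q i - q j) + ((q j - q h) + (q h - q k)) := by abel
  rw [hsplit, det3_add_right, det3_add_right, det3_self_left, det3_self_mid, zero_add, zero_add]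
  rfl

theorem Delta_eq_det3_sub_mid :
    Delta q i j h k = det3 (q i - q j) (q j - q h) (q j - q k) := by
  have hsplit : q j - q k = (q j - q h) + (q h - q k) := by abel
  rw [hsplit, det3_add_right, det3_self_mid, zero_add]
  rfl

theorem Delta_eq_zero_of_eq_or_eq_or_eq (hk : k = i ∨ k = j ∨ k = h) : Delta q i j h k = 0 := by
  rcases hk with rfl | rfl | rfl
  · rw [Delta_eq_det3_sub_left, sub_self, ← det3Right_apply, map_zero]
  · rw [Delta_eq_det3_sub_mid, sub_self, ← det3Right_apply, map_zero]
  · rw [Delta, sub_self, ← det3Right_apply, map_zero]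

end Delta

theorem statement2_general (n : ℕ) (m : Fin n → ℝ) (q : Fin n → E3)
    (hcc : IsCentralConfig m q)
    (i j h : Fin n) :
    ∑ k ∈ Finset.univ \ {i, j, h},
      m k * (Rinv q i k - Rinv q j k) * Delta q i j h k = 0 := by
  have hsum := hcc.sum_mul_Rinv_apply_eq (det3Right (q i - q j) (q j - q h))
    (det3_self_left _ _)
  simp only [det3Right_apply, ← Delta_eq_det3_sub_left, ← Delta_eq_det3_sub_mid] at hsum
  have hvanish (k : Fin n) (_ : k ∈ Finset.univ) (hk : k ∉ Finset.univ \ {i, j, h}) :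
      m k * (Rinv q i k - Rinv q j k) * Delta q i j h k = 0 := by
    rw [Delta_eq_zero_of_eq_or_eq_or_eq q i j h k (by simpa [or_iff_not_imp_left] using hk), mul_zero]
  rw [Finset.sum_subset Finset.sdiff_subset hvanish]
  simp only [mul_sub, sub_mul, Finset.sum_sub_distrib, hsum, sub_self]

/-- If `n` bodies with positive masses at pairwise distinct positions in `ℝ³` form a
central configuration, then for all pairwise distinct `i, j, h`:
`∑_{k ∉ {i,j,h}} m_k (R_{ik} − R_{jk}) Δ_{ijhk} = 0`. -/
theorem statement2 (n : ℕ) (m : Fin n → ℝ) (q : Fin n → E3)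
    (hm : ∀ i, 0 < m i) (hq : Function.Injective q)
    (hcc : IsCentralConfig m q)
    (i j h : Fin n) (hij : i ≠ j) (hih : i ≠ h) (hjh : j ≠ h) :
    ∑ k ∈ Finset.univ \ {i, j, h},
      m k * (Rinv q i k - Rinv q j k) * Delta q i j h k = 0 :=
  statement2_general n m q hcc i j h
end
end

section
/- If n point masses with positive masses at pairwise distinct positions in ℝ^d form a central configuration, then for all pairwise distinct indices i₁, i₂, …, i_d one has ∑_{k ∉ {i₁,…,i_d}} m_k (R_{i₁k} − R_{i₂k}) Δ_{i₁,i₂,…,i_d,k} = 0, where Δ_{i₁,i₂,…,i_d,k} = det(q_{i₁} − q_{i₂}, q_{i₂} − q_{i₃}, …, q_{i_{d−1}} − q_{i_d}, q_{i_d} − q_k) is d! times the signed volume of the d-dimensional simplex with vertices q_{i₁},…,q_{i_d}, q_k. -/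
noncomputable section

open Finset

/-!
Let `L x` be the determinant with rows `q_{i₁} − q_{i₂}, …, q_{i_{d−1}} − q_{i_d}, x`. It is linear
in `x` and kills every `q_{i_a} − q_{i_{a+1}}` (a repeated row), so it takes one value on all the
`q_{i_a}`; hence `Δ_{i₁…i_d k} = L (q_{i₁} − q_k) = L (q_{i₂} − q_k)`, and this vanishes for
`k ∈ {i₁, …, i_d}`. Applying `L` to the central configuration equations at `i₁` and `i₂` and
subtracting, the right-hand sides `λ L (q_i − q_G)` cancel, which is the claimed identity.
-/

namespace IsCentralConfig

variable {n d : ℕ} {m : Fin n → ℝ} {q : Fin n → EuclideanSpace ℝ (Fin d)}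

theorem sum_mul_map_sub_eq (hcc : IsCentralConfig m q) (L : EuclideanSpace ℝ (Fin d) →ₗ[ℝ] ℝ)
    {i j : Fin n} (hij : L (q i) = L (q j)) :
    ∑ k, m k * Rinv q i k * L (q i - q k) = ∑ k, m k * Rinv q j k * L (q j - q k) := by
  obtain ⟨lam, hlam⟩ := hcc
  set G := (∑ j, m j)⁻¹ • ∑ j, m j • q j
  have key : ∀ i, ∑ k, m k * Rinv q i k * L (q i - q k) = lam * L (q i - G) := fun i => by
    rw [← Finset.sum_erase univ (a := i) (by simp), ← smul_eq_mul lam, ← map_smul, ← hlam i, map_sum]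
    simp only [map_smul, smul_eq_mul]
  rw [key, key, map_sub, map_sub, hij]

theorem sum_sdiff_mul_sub_eq_zero (hcc : IsCentralConfig m q)
    (L : EuclideanSpace ℝ (Fin d) →ₗ[ℝ] ℝ) {T : Finset (Fin n)}
    (hT : ∀ a ∈ T, ∀ b ∈ T, L (q a) = L (q b)) {i j : Fin n} (hi : i ∈ T) (hj : j ∈ T) :
    ∑ k ∈ univ \ T, m k * (Rinv q i k - Rinv q j k) * L (q i - q k) = 0 := by
  have hL : ∀ k, L (q i - q k) = L (q j - q k) := fun k => by
    rw [map_sub, map_sub, hT i hi j hj]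
  rw [Finset.sum_subset sdiff_subset fun k _ hk => by
    rw [map_sub, hT i hi k (by simpa using hk), sub_self, mul_zero]]
  calc ∑ k, m k * (Rinv q i k - Rinv q j k) * L (q i - q k)
      = ∑ k, m k * Rinv q i k * L (q i - q k) - ∑ k, m k * Rinv q j k * L (q j - q k) := by
        rw [← Finset.sum_sub_distrib]
        exact Finset.sum_congr rfl fun k _ => by rw [← hL k]; ring
    _ = 0 := sub_eq_zero.2 (hcc.sum_mul_map_sub_eq L (hT i hi j hj))

end IsCentralConfig

section ChainDet

variable {d : ℕ} (p : Fin (d + 1) → EuclideanSpace ℝ (Fin (d + 1)))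

def chainRows : Matrix (Fin (d + 1)) (Fin (d + 1)) ℝ :=
  Matrix.of fun a b => if h : (a : ℕ) + 1 < d + 1 then (p a - p ⟨a + 1, h⟩) b else 0

def chainDet : EuclideanSpace ℝ (Fin (d + 1)) →ₗ[ℝ] ℝ :=
  (Matrix.detRowAlternating.toMultilinearMap.toLinearMap (chainRows p) (Fin.last d)).comp
    (WithLp.linearEquiv 2 ℝ (Fin (d + 1) → ℝ)).toLinearMap

theorem chainDet_apply (x : EuclideanSpace ℝ (Fin (d + 1))) :
    chainDet p x = ((chainRows p).updateRow (Fin.last d) x.ofLp).det :=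
  rfl

theorem chainDet_castSucc_sub_succ (a : Fin d) : chainDet p (p a.castSucc - p a.succ) = 0 := by
  rw [chainDet_apply]
  refine Matrix.det_zero_of_row_eq (Fin.castSucc_lt_last a).ne' ?_
  rw [Matrix.updateRow_self, Matrix.updateRow_ne (Fin.castSucc_lt_last a).ne]
  ext b
  simp only [chainRows, Matrix.of_apply, Fin.val_castSucc, dif_pos (Nat.succ_lt_succ a.isLt)]
  rfl

theorem chainDet_apply_eq_apply (a b : Fin (d + 1)) : chainDet p (p a) = chainDet p (p b) := by
  have h0 : ∀ a, chainDet p (p a) = chainDet p (p 0) :=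
    Fin.induction rfl fun a ha => by
      rw [← ha, eq_comm, ← sub_eq_zero, ← map_sub, chainDet_castSucc_sub_succ]
  rw [h0 a, h0 b]

theorem det_chain_eq_chainDet (y : EuclideanSpace ℝ (Fin (d + 1))) :
    (Matrix.of fun a b : Fin (d + 1) =>
      if h : (a : ℕ) + 1 < d + 1 then (p a - p ⟨a + 1, h⟩) b else (p a - y) b).det
      = chainDet p (p (Fin.last d) - y) := by
  rw [chainDet_apply]
  congr 1
  ext a b
  by_cases h : (a : ℕ) + 1 < d + 1
  · have ha : a ≠ Fin.last d := fun ha => by simp [ha] at h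
    rw [Matrix.updateRow_ne ha]
    simp only [chainRows, Matrix.of_apply, dif_pos h]
  · obtain rfl : a = Fin.last d := Fin.ext (by rw [Fin.val_last]; omega)
    simp

end ChainDet

/-- If `n` bodies with positive masses at pairwise distinct positions in `ℝ^d` form a
central configuration, then for all pairwise distinct indices `i₁, …, i_d`:
`∑_{k ∉ {i₁,…,i_d}} m_k (R_{i₁k} − R_{i₂k}) Δ_{i₁,…,i_d,k} = 0`, where
`Δ_{i₁,…,i_d,k} = det(q_{i₁} − q_{i₂}, …, q_{i_{d−1}} − q_{i_d}, q_{i_d} − q_k)`. -/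
theorem statement3 (n d : ℕ) (hd : 2 ≤ d)
    (m : Fin n → ℝ) (q : Fin n → EuclideanSpace ℝ (Fin d))
    (hcc : IsCentralConfig m q)
    (ι : Fin d → Fin n) :
    ∑ k ∈ Finset.univ \ Finset.image ι Finset.univ,
      m k * (Rinv q (ι ⟨0, by omega⟩) k - Rinv q (ι ⟨1, by omega⟩) k) *
        Matrix.det (Matrix.of fun (a b : Fin d) =>
          if hab : (a : ℕ) + 1 < d then (q (ι a) - q (ι ⟨(a : ℕ) + 1, hab⟩)) b
          else (q (ι a) - q k) b) = 0 := by
  obtain ⟨d, rfl⟩ : ∃ d', d = d' + 1 := ⟨d - 1, by omega⟩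
  have hL : ∀ a b, chainDet (q ∘ ι) (q (ι a)) = chainDet (q ∘ ι) (q (ι b)) :=
    chainDet_apply_eq_apply (q ∘ ι)
  rw [← hcc.sum_sdiff_mul_sub_eq_zero (chainDet (q ∘ ι)) (T := image ι univ) (by simpa using hL)
    (mem_image_of_mem ι (mem_univ ⟨0, by omega⟩)) (mem_image_of_mem ι (mem_univ ⟨1, by omega⟩))]
  refine Finset.sum_congr rfl fun k _ => ?_
  have hdet := det_chain_eq_chainDet (q ∘ ι) (q k)
  simp only [Function.comp_apply] at hdet
  rw [hdet, map_sub, map_sub, hL (Fin.last d) ⟨0, by omega⟩]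
end
end

section
/- Let q₁,…,q₇ in ℝ³ be a symmetric configuration with r₁₆ > r₁₅. Then the points q₁, q₅, q₆, q₂ form an isosceles trapezoid and r₅₆ = r₁₆² − r₁₅². -/
noncomputable section

open Finset

/-! The linear part `L` of the order-3 rotation is itself of order 3 and maps the plane `P`
spanned by the sides of the unit triangle `q₁q₂q₃` to itself, so it fixes the line `Pᗮ`
pointwise (a real cube root of unity is `1`); hence `L u − u ∈ P` for every `u`. Taking
`u = q₅ − q₁`, so that `L u = q₆ − q₂`, shows that `q₆ − q₅ − t (q₂ − q₁)` lies in `P` for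
every `t`. Its inner products with the sides `q₂ − q₁`, `q₃ − q₂` are combinations of squared
distances, and the symmetry equalities make both vanish for `t = r₁₆² − r₁₅²`; being in
`P ∩ Pᗮ`, the vector is then `0`. Thus `q₆ − q₅ = (r₁₆² − r₁₅²) (q₂ − q₁)`, and `r₁₂ = 1`
gives `r₅₆ = r₁₆² − r₁₅²`. -/

section InnerProductSpace

open RealInnerProductSpace Module Submodule

variable {E : Type*} [NormedAddCommGroup E] [InnerProductSpace ℝ E]

theorem inner_sub_sub_eq_dist_sq (x y z p : E) :
    ⟪x - y, z - p⟫ = (dist x p ^ 2 + dist y z ^ 2 - dist x z ^ 2 - dist y p ^ 2) / 2 := by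
  simp only [dist_eq_norm, norm_sub_sq_real, inner_sub_left, inner_sub_right]
  ring

theorem linearIndependent_pair_of_inner_sq_ne {a b : E} (h : ⟪a, b⟫ ^ 2 ≠ ⟪a, a⟫ * ⟪b, b⟫) :
    LinearIndependent ℝ ![a, b] := by
  rw [LinearIndependent.pair_iff]
  intro s t hst
  have ha := congrArg (⟪a, ·⟫) hst
  have hb := congrArg (⟪b, ·⟫) hst
  simp only [inner_add_right, real_inner_smul_right, inner_zero_right, real_inner_comm a b] at ha hb
  have hgram : ⟪a, a⟫ * ⟪b, b⟫ - ⟪a, b⟫ ^ 2 ≠ 0 := sub_ne_zero.2 h.symm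
  constructor
  · refine (mul_eq_zero.1 (?_ : s * (⟪a, a⟫ * ⟪b, b⟫ - ⟪a, b⟫ ^ 2) = 0)).resolve_right hgram
    linear_combination ⟪b, b⟫ * ha - ⟪a, b⟫ * hb
  · refine (mul_eq_zero.1 (?_ : t * (⟪a, a⟫ * ⟪b, b⟫ - ⟪a, b⟫ ^ 2) = 0)).resolve_right hgram
    linear_combination ⟪a, a⟫ * hb - ⟪a, b⟫ * ha

theorem mem_orthogonal_span_pair_iff {a b w : E} :
    w ∈ (span ℝ (Set.range ![a, b]))ᗮ ↔ ⟪w, a⟫ = 0 ∧ ⟪w, b⟫ = 0 := by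
  rw [← span_singleton_le_iff_mem, ← isOrtho_iff_le, isOrtho_span]
  simp only [Set.mem_singleton_iff, Set.forall_mem_range, Fin.forall_fin_two, forall_eq,
    Matrix.cons_val_zero, Matrix.cons_val_one]

theorem finrank_orthogonal_span_pair [FiniteDimensional ℝ E] (hE : finrank ℝ E = 3) {a b : E}
    (hab : LinearIndependent ℝ ![a, b]) : finrank ℝ (span ℝ (Set.range ![a, b]))ᗮ = 1 := by
  have h := (span ℝ (Set.range ![a, b])).finrank_add_finrank_orthogonal
  rw [finrank_span_eq_card hab, Fintype.card_fin, hE] at h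
  omega

theorem LinearMap.apply_eq_self_of_finrank_eq_one {V : Type*} [AddCommGroup V] [Module ℝ V]
    (f : V →ₗ[ℝ] V) (hf : ∀ x, f (f (f x)) = x) {K : Submodule ℝ V} (hK : finrank ℝ K = 1)
    (hfK : ∀ x ∈ K, f x ∈ K) {x : V} (hx : x ∈ K) : f x = x := by
  rcases eq_or_ne x 0 with rfl | hx0
  · exact map_zero f
  obtain ⟨c, hc⟩ := (finrank_eq_one_iff_of_nonzero' (⟨x, hx⟩ : K) (by simpa using hx0)).1 hK
    ⟨f x, hfK x hx⟩
  replace hc : c • x = f x := congrArg Subtype.val hc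
  have hc3 : c ^ 3 • x = (1 : ℝ) • x := by
    conv_rhs => rw [one_smul, ← hf x]
    simp only [← hc, map_smul, smul_smul, pow_succ, pow_zero, one_mul]
  have hc1 : c = 1 := by
    rw [← (show Odd 3 by decide).pow_inj, one_pow]
    exact smul_left_injective ℝ hx0 hc3
  rw [← hc, hc1, one_smul]

theorem LinearIsometryEquiv.apply_mem_orthogonal (L : E ≃ₗᵢ[ℝ] E) (hL : ∀ x, L (L (L x)) = x)
    {S : Submodule ℝ E} (hS : ∀ x ∈ S, L x ∈ S) {y : E} (hy : y ∈ Sᗮ) : L y ∈ Sᗮ := by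
  rw [mem_orthogonal] at hy ⊢
  intro s hs
  rw [← hL s, L.inner_map_map]
  exact hy _ (hS _ (hS _ hs))

theorem LinearIsometryEquiv.apply_sub_self_mem (L : E ≃ₗᵢ[ℝ] E) (hL : ∀ x, L (L (L x)) = x)
    {S : Submodule ℝ E} [S.HasOrthogonalProjection] (hS : ∀ x ∈ S, L x ∈ S)
    (hS' : finrank ℝ Sᗮ = 1) (u : E) : L u - u ∈ S := by
  obtain ⟨y, hy, z, hz, rfl⟩ := S.exists_add_mem_mem_orthogonal u
  have hLz : L z = z := L.toLinearMap.apply_eq_self_of_finrank_eq_one hL hS'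
    (fun _ hx => L.apply_mem_orthogonal hL hS hx) hz
  rw [map_add, hLz, add_sub_add_right_eq_sub]
  exact S.sub_mem (hS y hy) hy

theorem LinearIsometryEquiv.apply_sub_self_mem_span_pair [FiniteDimensional ℝ E]
    (hE : finrank ℝ E = 3) (L : E ≃ₗᵢ[ℝ] E) (hL : ∀ x, L (L (L x)) = x) {a b : E}
    (hab : LinearIndependent ℝ ![a, b]) (hLa : L a = b) (hLb : L b = -(a + b)) (u : E) :
    L u - u ∈ span ℝ (Set.range ![a, b]) := by
  set S := span ℝ (Set.range ![a, b])
  have haS : a ∈ S := subset_span ⟨0, rfl⟩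
  have hbS : b ∈ S := subset_span ⟨1, rfl⟩
  have hmap : S.map L.toLinearMap ≤ S := by
    rw [map_span_le]
    rintro _ ⟨i, rfl⟩
    fin_cases i
    · exact (congrArg (· ∈ S) hLa).mpr hbS
    · exact (congrArg (· ∈ S) hLb).mpr (S.neg_mem (S.add_mem haS hbS))
  exact L.apply_sub_self_mem hL (fun x hx => hmap (mem_map_of_mem hx))
    (finrank_orthogonal_span_pair hE hab) u

end InnerProductSpace

section Isometry

variable {F : Type*} [NormedAddCommGroup F] [NormedSpace ℝ F]

theorem IsometryEquiv.toRealLinearIsometryEquiv_sub (ρ : F ≃ᵢ F) (x y : F) :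
    ρ.toRealLinearIsometryEquiv (x - y) = ρ x - ρ y := by
  rw [map_sub, ρ.toRealLinearIsometryEquiv_apply, ρ.toRealLinearIsometryEquiv_apply,
    sub_sub_sub_cancel_right]

theorem IsometryEquiv.toRealLinearIsometryEquiv_cube (ρ : F ≃ᵢ F) (hρ : ∀ x, ρ (ρ (ρ x)) = x)
    (x : F) : ρ.toRealLinearIsometryEquiv (ρ.toRealLinearIsometryEquiv
      (ρ.toRealLinearIsometryEquiv x)) = x := by
  conv_lhs => rw [← sub_zero x]
  rw [toRealLinearIsometryEquiv_sub, toRealLinearIsometryEquiv_sub,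
    toRealLinearIsometryEquiv_sub, hρ, hρ, sub_zero]

end Isometry

section SymmetricConfig

open RealInnerProductSpace

theorem IsSymmetricConfig.sub_eq_smul {q : Fin 7 → E3} (hsym : IsSymmetricConfig q) :
    q 5 - q 4 = (dist (q 0) (q 5) ^ 2 - dist (q 0) (q 4) ^ 2) • (q 1 - q 0) := by
  obtain ⟨h01, h02, h12, -, -, -, h04, -, -, -, -, -, h05, h06, h14, h16, h24,
    ρ, hρ3, hρ0, hρ1, hρ2, hρ4, -⟩ := hsym
  set L := ρ.toRealLinearIsometryEquiv
  have hL (x y : E3) : L (x - y) = ρ x - ρ y := ρ.toRealLinearIsometryEquiv_sub x y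
  set t := dist (q 0) (q 5) ^ 2 - dist (q 0) (q 4) ^ 2
  set a := q 1 - q 0 with ha
  set b := q 2 - q 1 with hb
  have haa : ⟪a, a⟫ = 1 := by
    rw [real_inner_self_eq_norm_sq, ← dist_eq_norm, dist_comm, h01, one_pow]
  have hbb : ⟪b, b⟫ = 1 := by
    rw [real_inner_self_eq_norm_sq, ← dist_eq_norm, dist_comm, h12, one_pow]
  have hab : ⟪a, b⟫ = -1 / 2 := by
    rw [inner_sub_sub_eq_dist_sq, dist_self, h01, h02, h12]
    norm_num
  set S := Submodule.span ℝ (Set.range ![a, b])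
  have haS : a ∈ S := Submodule.subset_span ⟨0, rfl⟩
  have hmem : q 5 - q 4 - t • a ∈ S := by
    have hplane := L.apply_sub_self_mem_span_pair (a := a) (b := b) finrank_euclideanSpace_fin
      (ρ.toRealLinearIsometryEquiv_cube fun x => DFunLike.congr_fun hρ3 x)
      (linearIndependent_pair_of_inner_sq_ne (by rw [haa, hbb, hab]; norm_num))
      (by rw [ha, hL, hρ0, hρ1]) (by rw [hb, hL, hρ1, hρ2, ha]; abel) (q 4 - q 0)
    rw [hL, hρ0, hρ4] at hplane
    convert S.add_mem hplane (S.smul_mem (1 - t) haS) using 1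
    rw [ha]
    module
  have hinner_a : ⟪q 5 - q 4, a⟫ = t := by
    rw [ha, inner_sub_sub_eq_dist_sq, dist_comm (q 5), dist_comm (q 4) (q 1),
      dist_comm (q 5), dist_comm (q 4), ← h04, ← h06, ← h05]
    ring
  have hinner_b : ⟪q 5 - q 4, b⟫ = -t / 2 := by
    rw [hb, inner_sub_sub_eq_dist_sq, dist_comm (q 5), dist_comm (q 4) (q 2),
      dist_comm (q 5), dist_comm (q 4), ← h04, ← h24, ← h16, ← h14, ← h06, ← h05]
    ring
  have hperp : q 5 - q 4 - t • a ∈ Sᗮ := by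
    rw [mem_orthogonal_span_pair_iff, inner_sub_left (q 5 - q 4), inner_sub_left (q 5 - q 4),
      real_inner_smul_left,
      real_inner_smul_left, hinner_a, hinner_b, haa, hab]
    constructor <;> ring
  exact sub_eq_zero.1 (Submodule.disjoint_def.1 S.orthogonal_disjoint _ hmem hperp)

end SymmetricConfig

/-- In a symmetric configuration with `r₁₆ > r₁₅`, the points `q₁, q₅, q₆, q₂` form
an isosceles trapezoid (the sides `q₅q₆` and `q₁q₂` are parallel, the legs `q₁q₅`, `q₂q₆` are
equal, and the diagonals `q₁q₆`, `q₅q₂` are equal), and `r₅₆ = r₁₆² − r₁₅²`. -/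
theorem statement5 (q : Fin 7 → E3) (hsym : IsSymmetricConfig q)
    (h : dist (q 0) (q 4) < dist (q 0) (q 5)) :
    (∃ t : ℝ, q 5 - q 4 = t • (q 1 - q 0)) ∧
    dist (q 0) (q 4) = dist (q 1) (q 5) ∧
    dist (q 0) (q 5) = dist (q 1) (q 4) ∧
    dist (q 4) (q 5) = dist (q 0) (q 5) ^ 2 - dist (q 0) (q 4) ^ 2 := by
  have hpar := hsym.sub_eq_smul
  obtain ⟨h01, -, -, -, -, -, h04, -, -, -, -, -, h05, h06, -⟩ := hsym
  have ht : 0 ≤ dist (q 0) (q 5) ^ 2 - dist (q 0) (q 4) ^ 2 :=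
    sub_nonneg.2 (pow_le_pow_left₀ dist_nonneg h.le 2)
  refine ⟨⟨_, hpar⟩, h04, h05.trans h06, ?_⟩
  rw [dist_comm, dist_eq_norm, hpar, norm_smul, Real.norm_of_nonneg ht, ← dist_eq_norm,
    dist_comm (q 1), h01, mul_one]
end
end

section
/- Let q₁,…,q₅ be points in ℝ³ with ‖qᵢ − qⱼ‖ = 1 for all 1 ≤ i < j ≤ 4, ‖q₂ − q₅‖ = ‖q₃ − q₅‖ = r₁₆, ‖q₁ − q₅‖ = r₁₅ and ‖q₄ − q₅‖ = r₄₅. Then, with s_{ij} = r_{ij}², the relation g(s₁₅, s₁₆, s₄₅) = 0 holds, i.e. −3 + 2s₁₅ − 3s₁₅² + 4s₁₆ + 4s₁₅s₁₆ − 4s₁₆² + 2s₄₅ + 2s₁₅s₄₅ + 4s₁₆s₄₅ − 3s₄₅² = 0. -/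
noncomputable section

open Finset

/-! The four vectors `qᵢ − q₁` (`i = 2, …, 5`) live in `ℝ³`, so their Gram matrix is singular.
By polarization, twice that Gram matrix has entries `r₁ᵢ² + r₁ⱼ² − rᵢⱼ²`, and for the given
distances its determinant is exactly `g(s₁₅, s₁₆, s₄₅)`. -/

open Matrix Module

theorem Matrix.det_gram_eq_zero_of_finrank_lt {ι E : Type*} [Fintype ι] [DecidableEq ι]
    [NormedAddCommGroup E] [InnerProductSpace ℝ E] [FiniteDimensional ℝ E] (v : ι → E)
    (h : finrank ℝ E < Fintype.card ι) : (gram ℝ v).det = 0 := by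
  by_contra hdet
  have := (det_gram_ne_zero_iff_linearIndependent.mp hdet).fintype_card_le_finrank
  omega

theorem two_mul_real_inner_sub_sub_eq_dist_sq {E : Type*} [NormedAddCommGroup E]
    [InnerProductSpace ℝ E] (a b o : E) :
    2 * inner ℝ (a - o) (b - o) = dist a o ^ 2 + dist b o ^ 2 - dist a b ^ 2 := by
  rw [dist_eq_norm, dist_eq_norm, dist_eq_norm, ← sub_sub_sub_cancel_right a b o,
    norm_sub_sq_real (a - o) (b - o)]
  ring

theorem det_polarized_dist_sq_eq_zero_of_finrank_lt {ι E : Type*} [Fintype ι] [DecidableEq ι]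
    [NormedAddCommGroup E] [InnerProductSpace ℝ E] [FiniteDimensional ℝ E]
    (h : finrank ℝ E < Fintype.card ι) (p : ι → E) (o : E) :
    (of fun i j => dist (p i) o ^ 2 + dist (p j) o ^ 2 - dist (p i) (p j) ^ 2).det = 0 := by
  have hgram : (of fun i j => dist (p i) o ^ 2 + dist (p j) o ^ 2 - dist (p i) (p j) ^ 2)
      = (2 : ℝ) • gram ℝ (fun i => p i - o) := by
    ext i j
    simp [two_mul_real_inner_sub_sub_eq_dist_sq]
  rw [hgram, det_smul, det_gram_eq_zero_of_finrank_lt _ h, mul_zero]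

theorem gfun_eq_det (s15 s16 s45 : ℝ) :
    gfun s15 s16 s45 =
      !![2, 1, 1, 1 + s15 - s16;
         1, 2, 1, 1 + s15 - s16;
         1, 1, 2, 1 + s15 - s45;
         1 + s15 - s16, 1 + s15 - s16, 1 + s15 - s45, 2 * s15].det := by
  simp [det_succ_row_zero, Fin.sum_univ_succ, Fin.succAbove]
  unfold gfun
  ring

/-- Five points in `ℝ³` with `‖qᵢ − qⱼ‖ = 1` for `1 ≤ i < j ≤ 4`,
`‖q₂ − q₅‖ = ‖q₃ − q₅‖ = r₁₆`, `‖q₁ − q₅‖ = r₁₅`, `‖q₄ − q₅‖ = r₄₅` satisfy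
`g(r₁₅², r₁₆², r₄₅²) = 0`. -/
theorem statement6 (q : Fin 5 → E3) (r15 r16 r45 : ℝ)
    (h12 : dist (q 0) (q 1) = 1) (h13 : dist (q 0) (q 2) = 1) (h14 : dist (q 0) (q 3) = 1)
    (h23 : dist (q 1) (q 2) = 1) (h24 : dist (q 1) (q 3) = 1) (h34 : dist (q 2) (q 3) = 1)
    (h25 : dist (q 1) (q 4) = r16) (h35 : dist (q 2) (q 4) = r16)
    (h15 : dist (q 0) (q 4) = r15) (h45 : dist (q 3) (q 4) = r45) :
    gfun (r15 ^ 2) (r16 ^ 2) (r45 ^ 2) = 0 := by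
  have hdim : finrank ℝ E3 < Fintype.card (Fin 4) := by simp
  rw [gfun_eq_det, ← det_polarized_dist_sq_eq_zero_of_finrank_lt hdim ![q 1, q 2, q 3, q 4] (q 0)]
  congr 1
  ext i j
  fin_cases i <;> fin_cases j <;>
    simp [dist_comm _ (q 0), dist_comm (q 4), dist_comm (q 3) (q 1), dist_comm (q 3) (q 2),
      dist_comm (q 2) (q 1), h12, h13, h14, h15, h23, h24, h34, h25, h35, h45] <;> ring
end
end

section
/- Let q₁,…,q₇ in ℝ³ be a symmetric configuration in Ω with masses satisfying m₁ = m₂ = m₃ and m₅ = m₆ = m₇, and let b = r₅₆. Then f₁₄₇ = b·f₂₄₁. -/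
noncomputable section

open Finset

section Statement9Aux

open RealInnerProductSpace

lemma inner_formula (x y : E3) : ⟪x, y⟫ = (‖x‖^2 + ‖y‖^2 - ‖x - y‖^2)/2 := by
  rw [norm_sub_sq_real]; ring

lemma inner_points (q : Fin 7 → E3) (i j : Fin 7) :
    ⟪q i - q 3, q j - q 3⟫
      = (dist (q i) (q 3)^2 + dist (q j) (q 3)^2 - dist (q i) (q j)^2)/2 := by
  rw [inner_formula, sub_sub_sub_cancel_right, ← dist_eq_norm, ← dist_eq_norm, ← dist_eq_norm]

lemma eq_zero_of_inner (v0 v1 v2 w : E3)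
    (hspan : Submodule.span ℝ ({v0, v1, v2} : Set E3) = ⊤)
    (h0 : ⟪w, v0⟫ = 0) (h1 : ⟪w, v1⟫ = 0) (h2 : ⟪w, v2⟫ = 0) : w = 0 := by
  have key : ∀ x ∈ Submodule.span ℝ ({v0, v1, v2} : Set E3), ⟪w, x⟫ = 0 := by
    intro x hx
    induction hx using Submodule.span_induction with
    | mem x hx => rcases hx with rfl | rfl | rfl <;> assumption
    | zero => simp
    | add x y _ _ ihx ihy => rw [inner_add_right, ihx, ihy]; ring
    | smul a x _ ih => rw [real_inner_smul_right, ih]; ring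
  exact inner_self_eq_zero.mp (key w (hspan ▸ Submodule.mem_top))

lemma span_top (v0 v1 v2 : E3)
    (i00 : ⟪v0, v0⟫ = 1) (i11 : ⟪v1, v1⟫ = 1) (i22 : ⟪v2, v2⟫ = 1)
    (i01 : ⟪v0, v1⟫ = 1/2) (i02 : ⟪v0, v2⟫ = 1/2) (i12 : ⟪v1, v2⟫ = 1/2) :
    Submodule.span ℝ ({v0, v1, v2} : Set E3) = ⊤ := by
  have i10 : ⟪v1, v0⟫ = 1/2 := by rw [real_inner_comm]; exact i01
  have i20 : ⟪v2, v0⟫ = 1/2 := by rw [real_inner_comm]; exact i02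
  have i21 : ⟪v2, v1⟫ = 1/2 := by rw [real_inner_comm]; exact i12
  have hindep : LinearIndependent ℝ ![v0, v1, v2] := by
    rw [Fintype.linearIndependent_iff]
    intro g hg
    rw [Fin.sum_univ_three] at hg
    simp only [Matrix.cons_val_zero, Matrix.cons_val_one, Matrix.head_cons,
      Matrix.cons_val_two, Matrix.tail_cons] at hg
    have e0 := congrArg (fun x => ⟪x, v0⟫) hg
    have e1 := congrArg (fun x => ⟪x, v1⟫) hg
    have e2 := congrArg (fun x => ⟪x, v2⟫) hg
    simp only [inner_add_left, real_inner_smul_left, inner_zero_left,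
      i00, i11, i22, i01, i02, i12, i10, i20, i21] at e0 e1 e2
    intro i
    fin_cases i <;> [skip; skip; skip] <;> simp <;> linarith
  have hc : Fintype.card (Fin 3) = Module.finrank ℝ E3 := by
    simp [finrank_euclideanSpace]
  have htop := hindep.span_eq_top_of_card_eq_finrank hc
  have hr : Set.range ![v0, v1, v2] = ({v0, v1, v2} : Set E3) := by
    simp only [Matrix.range_cons, Matrix.range_empty, Set.union_empty]
    ext x; simp [or_comm, or_left_comm]
  rwa [hr] at htop

lemma det3_expand (u v w : E3) :
    det3 u v w = u 0 * (v 1 * w 2 - v 2 * w 1) - u 1 * (v 0 * w 2 - v 2 * w 0)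
      + u 2 * (v 0 * w 1 - v 1 * w 0) := by
  simp [det3, Matrix.det_fin_three]; ring

lemma Rinv_congr (q : Fin 7 → E3) {i j k l : Fin 7}
    (h : dist (q i) (q j) = dist (q k) (q l)) : Rinv q i j = Rinv q k l := by
  unfold Rinv
  rw [← dist_eq_norm, ← dist_eq_norm, h]

end Statement9Aux

open RealInnerProductSpace

set_option maxHeartbeats 2000000 in
/-- For a symmetric configuration in `Ω` with `m₁ = m₂ = m₃` and `m₅ = m₆ = m₇`,
with `b = r₅₆`, one has `f₁₄₇ = b·f₂₄₁`. -/
theorem statement9 (q : Fin 7 → E3) (m : Fin 7 → ℝ)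
    (hΩ : InOmega q)
    (hm12 : m 0 = m 1) (hm23 : m 1 = m 2) (hm56 : m 4 = m 5) (hm67 : m 5 = m 6) :
    fval m q 0 3 6 = dist (q 4) (q 5) * fval m q 1 3 0 := by
  obtain ⟨hsym, hΩ1, hΩ2, hΩ3, hΩ4, hΩ5, hΩ6⟩ := hΩ
  obtain ⟨d01, d02, d12, d03, d13, d23, h0415, h1526, h3435, h3536, h4556, h5646,
    h0506, h0614, h1416, h1624, h2425, -⟩ := hsym
  set a := dist (q 0) (q 4) with ha
  set c := dist (q 3) (q 4) with hc
  set d := dist (q 0) (q 5) with hd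
  -- all needed distances
  have d15 : dist (q 1) (q 5) = a := h0415.symm
  have d26 : dist (q 2) (q 6) = a := (h0415.trans h1526).symm
  have d35 : dist (q 3) (q 5) = c := h3435.symm
  have d36 : dist (q 3) (q 6) = c := (h3435.trans h3536).symm
  have d06 : dist (q 0) (q 6) = d := h0506.symm
  have d14 : dist (q 1) (q 4) = d := (h0506.trans h0614).symm
  have d16 : dist (q 1) (q 6) = d := ((h0506.trans h0614).trans h1416).symm
  have d24 : dist (q 2) (q 4) = d := (((h0506.trans h0614).trans h1416).trans h1624).symm
  have d25 : dist (q 2) (q 5) = d :=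
    ((((h0506.trans h0614).trans h1416).trans h1624).trans h2425).symm
  -- inner products among the base vectors
  have i00 : ⟪q 0 - q 3, q 0 - q 3⟫ = 1 := by
    rw [inner_points, d03, dist_self]; norm_num
  have i11 : ⟪q 1 - q 3, q 1 - q 3⟫ = 1 := by
    rw [inner_points, d13, dist_self]; norm_num
  have i22 : ⟪q 2 - q 3, q 2 - q 3⟫ = 1 := by
    rw [inner_points, d23, dist_self]; norm_num
  have i01 : ⟪q 0 - q 3, q 1 - q 3⟫ = 1/2 := by
    rw [inner_points, d03, d13, d01]; norm_num
  have i02 : ⟪q 0 - q 3, q 2 - q 3⟫ = 1/2 := by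
    rw [inner_points, d03, d23, d02]; norm_num
  have i12 : ⟪q 1 - q 3, q 2 - q 3⟫ = 1/2 := by
    rw [inner_points, d13, d23, d12]; norm_num
  have i10 : ⟪q 1 - q 3, q 0 - q 3⟫ = 1/2 := by rw [real_inner_comm]; exact i01
  have i20 : ⟪q 2 - q 3, q 0 - q 3⟫ = 1/2 := by rw [real_inner_comm]; exact i02
  have i21 : ⟪q 2 - q 3, q 1 - q 3⟫ = 1/2 := by rw [real_inner_comm]; exact i12
  have hspan := span_top (q 0 - q 3) (q 1 - q 3) (q 2 - q 3) i00 i11 i22 i01 i02 i12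
  -- inner products of the lower triangle with the base vectors
  have j40 : ⟪q 4 - q 3, q 0 - q 3⟫ = (c^2 + 1 - a^2)/2 := by
    rw [inner_points, dist_comm (q 4) (q 3), ← hc, dist_comm (q 4) (q 0), ← ha, d03]; ring
  have j41 : ⟪q 4 - q 3, q 1 - q 3⟫ = (c^2 + 1 - d^2)/2 := by
    rw [inner_points, dist_comm (q 4) (q 3), ← hc, dist_comm (q 4) (q 1), d14, d13]; ring
  have j42 : ⟪q 4 - q 3, q 2 - q 3⟫ = (c^2 + 1 - d^2)/2 := by
    rw [inner_points, dist_comm (q 4) (q 3), ← hc, dist_comm (q 4) (q 2), d24, d23]; ring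
  have j50 : ⟪q 5 - q 3, q 0 - q 3⟫ = (c^2 + 1 - d^2)/2 := by
    rw [inner_points, dist_comm (q 5) (q 3), d35, dist_comm (q 5) (q 0), ← hd, d03]; ring
  have j51 : ⟪q 5 - q 3, q 1 - q 3⟫ = (c^2 + 1 - a^2)/2 := by
    rw [inner_points, dist_comm (q 5) (q 3), d35, dist_comm (q 5) (q 1), d15, d13]; ring
  have j52 : ⟪q 5 - q 3, q 2 - q 3⟫ = (c^2 + 1 - d^2)/2 := by
    rw [inner_points, dist_comm (q 5) (q 3), d35, dist_comm (q 5) (q 2), d25, d23]; ring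
  have j60 : ⟪q 6 - q 3, q 0 - q 3⟫ = (c^2 + 1 - d^2)/2 := by
    rw [inner_points, dist_comm (q 6) (q 3), d36, dist_comm (q 6) (q 0), d06, d03]; ring
  have j61 : ⟪q 6 - q 3, q 1 - q 3⟫ = (c^2 + 1 - d^2)/2 := by
    rw [inner_points, dist_comm (q 6) (q 3), d36, dist_comm (q 6) (q 1), d16, d13]; ring
  have j62 : ⟪q 6 - q 3, q 2 - q 3⟫ = (c^2 + 1 - a^2)/2 := by
    rw [inner_points, dist_comm (q 6) (q 3), d36, dist_comm (q 6) (q 2), d26, d23]; ring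
  -- the representation coefficients
  set p : ℝ := (c^2 + 1 - 3*a^2 + 2*d^2)/4 with hp
  set r : ℝ := (c^2 + 1 + a^2 - 2*d^2)/4 with hr
  -- the three representation identities
  have h4 : q 4 - q 3 = p • (q 0 - q 3) + r • (q 1 - q 3) + r • (q 2 - q 3) := by
    have hz := eq_zero_of_inner (q 0 - q 3) (q 1 - q 3) (q 2 - q 3)
      ((q 4 - q 3) - (p • (q 0 - q 3) + r • (q 1 - q 3) + r • (q 2 - q 3))) hspan
      (by rw [inner_sub_left, inner_add_left, inner_add_left, real_inner_smul_left,
            real_inner_smul_left, real_inner_smul_left, j40, i00, i10, i20, hp, hr]; ring)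
      (by rw [inner_sub_left, inner_add_left, inner_add_left, real_inner_smul_left,
            real_inner_smul_left, real_inner_smul_left, j41, i01, i11, i21, hp, hr]; ring)
      (by rw [inner_sub_left, inner_add_left, inner_add_left, real_inner_smul_left,
            real_inner_smul_left, real_inner_smul_left, j42, i02, i12, i22, hp, hr]; ring)
    exact sub_eq_zero.mp hz
  have h5 : q 5 - q 3 = r • (q 0 - q 3) + p • (q 1 - q 3) + r • (q 2 - q 3) := by
    have hz := eq_zero_of_inner (q 0 - q 3) (q 1 - q 3) (q 2 - q 3)
      ((q 5 - q 3) - (r • (q 0 - q 3) + p • (q 1 - q 3) + r • (q 2 - q 3))) hspan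
      (by rw [inner_sub_left, inner_add_left, inner_add_left, real_inner_smul_left,
            real_inner_smul_left, real_inner_smul_left, j50, i00, i10, i20, hp, hr]; ring)
      (by rw [inner_sub_left, inner_add_left, inner_add_left, real_inner_smul_left,
            real_inner_smul_left, real_inner_smul_left, j51, i01, i11, i21, hp, hr]; ring)
      (by rw [inner_sub_left, inner_add_left, inner_add_left, real_inner_smul_left,
            real_inner_smul_left, real_inner_smul_left, j52, i02, i12, i22, hp, hr]; ring)
    exact sub_eq_zero.mp hz
  have h6 : q 6 - q 3 = r • (q 0 - q 3) + r • (q 1 - q 3) + p • (q 2 - q 3) := by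
    have hz := eq_zero_of_inner (q 0 - q 3) (q 1 - q 3) (q 2 - q 3)
      ((q 6 - q 3) - (r • (q 0 - q 3) + r • (q 1 - q 3) + p • (q 2 - q 3))) hspan
      (by rw [inner_sub_left, inner_add_left, inner_add_left, real_inner_smul_left,
            real_inner_smul_left, real_inner_smul_left, j60, i00, i10, i20, hp, hr]; ring)
      (by rw [inner_sub_left, inner_add_left, inner_add_left, real_inner_smul_left,
            real_inner_smul_left, real_inner_smul_left, j61, i01, i11, i21, hp, hr]; ring)
      (by rw [inner_sub_left, inner_add_left, inner_add_left, real_inner_smul_left,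
            real_inner_smul_left, real_inner_smul_left, j62, i02, i12, i22, hp, hr]; ring)
    exact sub_eq_zero.mp hz
  -- rewrite all the point differences appearing in the Deltas
  have E36 : q 3 - q 6 = -(r • (q 0 - q 3) + r • (q 1 - q 3) + p • (q 2 - q 3)) := by
    rw [← h6]; abel
  have E30 : q 3 - q 0 = -(q 0 - q 3) := by abel
  have E64 : q 6 - q 4 = (r • (q 0 - q 3) + r • (q 1 - q 3) + p • (q 2 - q 3))
      - (p • (q 0 - q 3) + r • (q 1 - q 3) + r • (q 2 - q 3)) := by
    rw [← h6, ← h4]; abel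
  have E05 : q 0 - q 5 = (q 0 - q 3)
      - (r • (q 0 - q 3) + p • (q 1 - q 3) + r • (q 2 - q 3)) := by
    rw [← h5]; abel
  have E04 : q 0 - q 4 = (q 0 - q 3)
      - (p • (q 0 - q 3) + r • (q 1 - q 3) + r • (q 2 - q 3)) := by
    rw [← h4]; abel
  have E06 : q 0 - q 6 = (q 0 - q 3)
      - (r • (q 0 - q 3) + r • (q 1 - q 3) + p • (q 2 - q 3)) := by
    rw [← h6]; abel
  have E65 : q 6 - q 5 = (r • (q 0 - q 3) + r • (q 1 - q 3) + p • (q 2 - q 3))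
      - (r • (q 0 - q 3) + p • (q 1 - q 3) + r • (q 2 - q 3)) := by
    rw [← h6, ← h5]; abel
  -- the two key determinant identities
  have key1 : Delta q 0 3 6 4 = (p - r) * Delta q 1 3 0 5 := by
    rw [Delta, Delta, E36, E64, E30, E05]
    simp only [det3_expand, PiLp.sub_apply, PiLp.neg_apply, PiLp.add_apply, PiLp.smul_apply,
      smul_eq_mul]
    ring
  have key2 : Delta q 0 3 6 5 = (p - r) * (Delta q 1 3 0 4 + Delta q 1 3 0 6) := by
    rw [Delta, Delta, Delta, E36, E65, E30, E04, E06]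
    simp only [det3_expand, PiLp.sub_apply, PiLp.neg_apply, PiLp.add_apply, PiLp.smul_apply,
      smul_eq_mul]
    ring
  -- the side of the lower triangle
  have htpos : (0:ℝ) < p - r := by
    have h2 : a < d := lt_trans hΩ6 hΩ5
    have h3 : (0:ℝ) < d := lt_trans hΩ1 h2
    have e : p - r = (d - a) * (d + a) := by rw [hp, hr]; ring
    rw [e]
    exact mul_pos (sub_pos.mpr h2) (add_pos h3 hΩ1)
  have hb : dist (q 4) (q 5) = p - r := by
    have hsub : q 5 - q 4 = (p - r) • (q 1 - q 0) := by
      have e : q 5 - q 4 = (q 5 - q 3) - (q 4 - q 3) := by abel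
      have e2 : q 1 - q 0 = (q 1 - q 3) - (q 0 - q 3) := by abel
      rw [e, h5, h4, e2]
      module
    rw [dist_eq_norm, ← norm_neg, neg_sub, hsub, norm_smul, Real.norm_eq_abs,
      abs_of_pos htpos, ← dist_eq_norm, dist_comm (q 1) (q 0), d01, mul_one]
  -- equalities of the Rinv quantities
  have hR01 : Rinv q 0 1 = Rinv q 3 1 :=
    Rinv_congr q (by rw [d01, dist_comm (q 3) (q 1), d13])
  have hR02 : Rinv q 0 2 = Rinv q 3 2 :=
    Rinv_congr q (by rw [d02, dist_comm (q 3) (q 2), d23])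
  have hR12 : Rinv q 1 2 = Rinv q 3 2 :=
    Rinv_congr q (by rw [d12, dist_comm (q 3) (q 2), d23])
  have hR35 : Rinv q 3 5 = Rinv q 3 4 := Rinv_congr q (by rw [d35, hc])
  have hR36 : Rinv q 3 6 = Rinv q 3 4 := Rinv_congr q (by rw [d36, hc])
  have hR14 : Rinv q 1 4 = Rinv q 0 5 := Rinv_congr q (by rw [d14, hd])
  have hR15 : Rinv q 1 5 = Rinv q 0 4 := Rinv_congr q (by rw [d15, ha])
  have hR16 : Rinv q 1 6 = Rinv q 0 5 := Rinv_congr q (by rw [d16, hd])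
  -- expand the two sums
  have hset1 : (Finset.univ \ ({0, 3, 6} : Finset (Fin 7))) = {1, 2, 4, 5} := by decide
  have hset2 : (Finset.univ \ ({1, 3, 0} : Finset (Fin 7))) = {2, 4, 5, 6} := by decide
  rw [fval, fval, hset1, hset2, Finset.sum_insert (by decide), Finset.sum_insert (by decide),
    Finset.sum_insert (by decide), Finset.sum_singleton, Finset.sum_insert (by decide),
    Finset.sum_insert (by decide), Finset.sum_insert (by decide), Finset.sum_singleton,
    hR01, hR02, hR12, hR35, hR36, hR14, hR15, hR16, hb, ← hm56, ← (hm56.trans hm67)]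
  linear_combination (m 4 * (Rinv q 0 4 - Rinv q 3 4)) * key1
    + (m 4 * (Rinv q 0 5 - Rinv q 3 4)) * key2
end
end

section
/- Let q₁,…,q₇ in ℝ³ be a symmetric configuration in Ω with masses satisfying m₁ = m₂ = m₃ and m₅ = m₆ = m₇, and let b = r₅₆. Then f₂₇₅ = b·(f₂₅₁ + f₂₇₁). -/
noncomputable section

open Finset

/-!
The distances alone fix the configuration up to isometry. Put `g` for the centroid of
`q₁q₂q₃`; the vectors `q₁ − g`, `q₂ − q₃`, `g − q₄` are pairwise orthogonal, and expanding every
`qᵢ − q₄` in this frame shows that `q₅q₆q₇` is the image of `q₁q₂q₃` under the homothety of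
ratio `K = r₁₆² − r₁₅²` about the symmetry axis followed by a translation along it. Hence
`b = r₅₆ = K`, each `Δ` is a polynomial in `K`, the height of `q₅q₆q₇` and one frame determinant,
and once equal mutual distances are identified the claim is a polynomial identity.
-/

open scoped RealInnerProductSpace

theorem eq_sum_inner_div_inner_smul {F : Type*} [NormedAddCommGroup F] [InnerProductSpace ℝ F]
    [FiniteDimensional ℝ F] {ι : Type*} [Fintype ι] {v : ι → F} (h0 : ∀ i, v i ≠ 0)
    (horth : Pairwise fun i j => ⟪v i, v j⟫ = 0) (hcard : Fintype.card ι = Module.finrank ℝ F)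
    (x : F) : x = ∑ i, (⟪v i, x⟫ / ⟪v i, v i⟫) • v i := by
  let b := basisOfLinearIndependentOfCardEqFinrank'
    v (linearIndependent_of_ne_zero_of_inner_eq_zero h0 horth) hcard
  refine InnerProductSpace.ext_inner_left_basis b fun j => ?_
  simp only [b, coe_basisOfLinearIndependentOfCardEqFinrank', inner_sum, real_inner_smul_right]
  rw [Finset.sum_eq_single j (fun i _ hij => by rw [horth hij.symm, mul_zero]) (by simp),
    div_mul_cancel₀ _ (inner_self_ne_zero.mpr (h0 j))]

theorem real_inner_sub_sub_eq_dist_sq {F : Type*} [NormedAddCommGroup F] [InnerProductSpace ℝ F]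
    (x y z : F) : ⟪x - z, y - z⟫ = (dist x z ^ 2 + dist y z ^ 2 - dist x y ^ 2) / 2 := by
  rw [real_inner_eq_norm_mul_self_add_norm_mul_self_sub_norm_sub_mul_self_div_two,
    sub_sub_sub_cancel_right, dist_eq_norm, dist_eq_norm, dist_eq_norm]
  ring

theorem Delta_eq_zero_of_mem {n : ℕ} (q : Fin n → E3) {i j h k : Fin n}
    (hk : k ∈ ({i, j, h} : Finset (Fin n))) : Delta q i j h k = 0 := by
  simp only [Finset.mem_insert, Finset.mem_singleton] at hk
  rcases hk with rfl | rfl | rfl <;>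
    simp only [Delta, det3, PiLp.sub_apply, Matrix.det_fin_three, Matrix.of_apply,
      Matrix.cons_val', Matrix.cons_val_zero, Matrix.cons_val_fin_one, Matrix.cons_val_one,
      Matrix.cons_val] <;>
    ring

theorem fval_eq_sum (m : Fin 7 → ℝ) (q : Fin 7 → E3) (i j h : Fin 7) :
    fval m q i j h = ∑ k, m k * (Rinv q i k - Rinv q j k) * Delta q i j h k :=
  Finset.sum_subset (Finset.subset_univ _) fun k _ hk => by
    rw [Delta_eq_zero_of_mem q (by simpa [or_iff_not_imp_left] using hk), mul_zero]

theorem Delta_eq_of_frame {n : ℕ} {q : Fin n → E3} {o : E3} {e : Fin 3 → E3}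
    {c : Matrix (Fin n) (Fin 3) ℝ} (hq : ∀ i, q i = o + ∑ l, c i l • e l) (i j h k : Fin n) :
    Delta q i j h k =
      (Matrix.of ![c i - c j, c j - c h, c h - c k]).det * det3 (e 0) (e 1) (e 2) := by
  simp only [Delta, det3, hq, Fin.sum_univ_three, PiLp.sub_apply, PiLp.add_apply, PiLp.smul_apply,
    smul_eq_mul, Matrix.det_fin_three, Matrix.of_apply, Matrix.cons_val', Matrix.cons_val_zero,
    Matrix.cons_val_fin_one, Matrix.cons_val_one, Matrix.cons_val, Pi.sub_apply]
  ring

/-- `s = r₁₅`, `c = r₁₆`, `d = r₄₅`, `b = r₅₆`; rows and columns are 0-based bodies. -/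
def symmetricDist (s c d b : ℝ) : Matrix (Fin 7) (Fin 7) ℝ :=
  !![0, 1, 1, 1, s, c, c;
     1, 0, 1, 1, c, s, c;
     1, 1, 0, 1, c, c, s;
     1, 1, 1, 0, d, d, d;
     s, c, c, d, 0, b, b;
     c, s, c, d, b, 0, b;
     c, c, s, d, b, b, 0]

theorem symmetricDist_comm (s c d b : ℝ) (i j : Fin 7) :
    symmetricDist s c d b i j = symmetricDist s c d b j i := by
  fin_cases i <;> fin_cases j <;> rfl

theorem IsSymmetricConfig.dist_eq_symmetricDist {q : Fin 7 → E3} (hq : IsSymmetricConfig q)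
    (i j : Fin 7) :
    dist (q i) (q j) = symmetricDist (dist (q 0) (q 4)) (dist (q 0) (q 5)) (dist (q 3) (q 4))
      (dist (q 4) (q 5)) i j := by
  obtain ⟨h01, h02, h12, h03, h13, h23, h15, h26, h35, h36, h56, h46, h06, h14, h16, h24, h25, -⟩ :=
    hq
  have upper : ∀ i j : Fin 7, i ≤ j → dist (q i) (q j) = symmetricDist (dist (q 0) (q 4))
      (dist (q 0) (q 5)) (dist (q 3) (q 4)) (dist (q 4) (q 5)) i j := by
    intro i j hij
    fin_cases i <;> fin_cases j <;> simp [symmetricDist] at hij ⊢ <;> linarith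
  rcases le_total i j with hij | hji
  · exact upper i j hij
  · rw [dist_comm, upper j i hji, symmetricDist_comm]

/-- Coordinates of `qᵢ − q₄` (0-based rows) in the frame `(q₁ − g, q₂ − q₃, g − q₄)`, where `g` is
the centroid of `q₁q₂q₃`. -/
def symmetricCoords (K T : ℝ) : Matrix (Fin 7) (Fin 3) ℝ :=
  !![1, 0, 1; -1/2, 1/2, 1; -1/2, -1/2, 1; 0, 0, 0; K, 0, T; -K/2, K/2, T; -K/2, -K/2, T]

theorem exists_symmetricCoords_of_dist_eq {q : Fin 7 → E3} {s c d b : ℝ}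
    (hdist : ∀ i j, dist (q i) (q j) = symmetricDist s c d b i j) :
    ∃ e : Fin 3 → E3, ∃ T : ℝ,
      ∀ i, q i = q 3 + ∑ l, symmetricCoords (c ^ 2 - s ^ 2) T i l • e l := by
  obtain ⟨p, hp⟩ : ∃ p : Fin 7 → E3, ∀ i, q i - q 3 = p i := ⟨_, fun _ => rfl⟩
  have hgram (i j : Fin 7) : ⟪p i, p j⟫ = (symmetricDist s c d b i 3 ^ 2
      + symmetricDist s c d b j 3 ^ 2 - symmetricDist s c d b i j ^ 2) / 2 := by
    rw [← hp, ← hp, real_inner_sub_sub_eq_dist_sq, hdist, hdist, hdist]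
  let G : E3 := (3 : ℝ)⁻¹ • (p 0 + p 1 + p 2)
  let e : Fin 3 → E3 := ![p 0 - G, p 1 - p 2, G]
  have he : ∀ l k, ⟪e l, e k⟫ = !![1/3, 0, 0; 0, 1, 0; 0, 0, 2/3] l k := by
    intro l k
    fin_cases l <;> fin_cases k <;>
      simp only [e, G, symmetricDist, inner_sub_left, inner_add_left, inner_sub_right,
        inner_add_right, real_inner_smul_left, real_inner_smul_right, hgram, Matrix.of_apply,
        Matrix.cons_val', Matrix.cons_val_zero, Matrix.cons_val_one, Matrix.cons_val,
        Matrix.cons_val_fin_one, Fin.zero_eta, Fin.mk_one, Fin.reduceFinMk] <;> ring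
  have hcoef : ∀ i l, ⟪e l, p i⟫ / ⟪e l, e l⟫ =
      symmetricCoords (c ^ 2 - s ^ 2) ((3 + 3 * d ^ 2 - s ^ 2 - 2 * c ^ 2) / 4) i l := by
    intro i l
    rw [he]
    fin_cases i <;> fin_cases l <;>
      simp only [e, G, symmetricDist, symmetricCoords, inner_sub_left, inner_add_left,
        real_inner_smul_left, hgram, Matrix.of_apply, Matrix.cons_val', Matrix.cons_val_zero,
        Matrix.cons_val_one, Matrix.cons_val, Matrix.cons_val_fin_one, Fin.zero_eta, Fin.mk_one,
        Fin.reduceFinMk] <;> ring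
  have h0 (l : Fin 3) : e l ≠ 0 := by
    intro hl
    have := he l l
    rw [hl, inner_zero_left] at this
    fin_cases l <;> norm_num at this
  have horth : Pairwise fun l k => ⟪e l, e k⟫ = 0 := by
    intro l k hlk
    rw [he]
    fin_cases l <;> fin_cases k <;> simp_all
  have hcard : Fintype.card (Fin 3) = Module.finrank ℝ E3 := by simp
  refine ⟨e, (3 + 3 * d ^ 2 - s ^ 2 - 2 * c ^ 2) / 4, fun i => ?_⟩
  rw [← sub_eq_iff_eq_add', hp]
  calc p i = ∑ l, (⟪e l, p i⟫ / ⟪e l, e l⟫) • e l := eq_sum_inner_div_inner_smul h0 horth hcard _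
    _ = _ := by simp_rw [hcoef]

theorem eq_sq_sub_sq_of_dist_eq_symmetricDist {q : Fin 7 → E3} {s c d b : ℝ}
    (hdist : ∀ i j, dist (q i) (q j) = symmetricDist s c d b i j) (hsc : s ≤ c) :
    b = c ^ 2 - s ^ 2 := by
  obtain ⟨e, T, hframe⟩ := exists_symmetricCoords_of_dist_eq hdist
  have hs : 0 ≤ s := by simpa [hdist, symmetricDist] using dist_nonneg (x := q 0) (y := q 4)
  have h45 : q 4 - q 5 = (c ^ 2 - s ^ 2) • (q 0 - q 1) := by
    rw [hframe 4, hframe 5, hframe 0, hframe 1]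
    simp only [symmetricCoords, Fin.sum_univ_three, Matrix.of_apply, Matrix.cons_val',
      Matrix.cons_val_fin_one, Matrix.cons_val, Matrix.cons_val_one, Matrix.cons_val_zero]
    module
  calc b = dist (q 4) (q 5) := by simp [hdist, symmetricDist]
    _ = |c ^ 2 - s ^ 2| * dist (q 0) (q 1) := by
      rw [dist_eq_norm, h45, norm_smul, Real.norm_eq_abs, dist_eq_norm]
    _ = c ^ 2 - s ^ 2 := by
      simp [hdist, symmetricDist, abs_of_nonneg (sub_nonneg.2 (pow_le_pow_left₀ hs hsc 2))]

/-- For a symmetric configuration in `Ω` with `m₁ = m₂ = m₃` and `m₅ = m₆ = m₇`,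
with `b = r₅₆`, one has `f₂₇₅ = b·(f₂₅₁ + f₂₇₁)`. -/
theorem statement12 (q : Fin 7 → E3) (m : Fin 7 → ℝ)
    (hΩ : InOmega q)
    (hm12 : m 0 = m 1) (hm23 : m 1 = m 2) (hm56 : m 4 = m 5) (hm67 : m 5 = m 6) :
    fval m q 1 6 4 = dist (q 4) (q 5) * (fval m q 1 4 0 + fval m q 1 6 0) := by
  obtain ⟨hq, -, -, -, -, hdc, hsd⟩ := hΩ
  have hdist := hq.dist_eq_symmetricDist
  generalize dist (q 0) (q 4) = s, dist (q 0) (q 5) = c, dist (q 3) (q 4) = d,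
    dist (q 4) (q 5) = b at hdist hdc hsd ⊢
  obtain ⟨e, T, hframe⟩ := exists_symmetricCoords_of_dist_eq hdist
  have hb := eq_sq_sub_sq_of_dist_eq_symmetricDist hdist (by linarith)
  simp only [fval_eq_sum, Fin.sum_univ_seven, Rinv, ← dist_eq_norm, hdist,
    Delta_eq_of_frame hframe]
  simp only [symmetricDist, symmetricCoords, hb, ← hm12, ← hm23, ← hm56, ← hm67,
    Matrix.det_fin_three, Matrix.of_apply, Matrix.cons_val', Matrix.cons_val_zero,
    Matrix.cons_val_fin_one, Matrix.cons_val_one, Matrix.cons_val, Pi.sub_apply]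
  ring
end
end

section
/- Let A be a 3×3 real matrix whose entries satisfy A₁₁ < 0, A₁₂ > 0, A₁₃ < 0, A₂₁ < 0, A₂₂ > 0, A₃₁ < 0, A₃₂ = 0, A₃₃ > 0. If x ∈ ℝ³ is a nonzero vector with A x = 0, then the three components of x are either all strictly positive or all strictly negative. -/
noncomputable section

open Finset

open SignType

section SignPattern

variable {K : Type*} [Field K] [LinearOrder K] [IsStrictOrderedRing K]

theorem sign_pos_mul_add_pos_mul {p q u w : K} (hp : 0 < p) (hq : 0 < q)
    (hw : sign w = sign u) : sign (p * u + q * w) = sign u := by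
  obtain hu | rfl | hu := lt_trichotomy u 0
  · rw [sign_neg hu, sign_eq_neg_one_iff] at hw ⊢
    nlinarith
  · rw [sign_zero, sign_eq_zero_iff] at hw
    simp [hw]
  · rw [sign_pos hu, sign_eq_one_iff] at hw ⊢
    nlinarith

theorem sign_eq_of_mul_add_mul_eq_zero {a c u v : K} (ha : a < 0) (hc : 0 < c)
    (h : a * u + c * v = 0) : sign v = sign u := by
  have hv : v = (-a / c) * u := by
    field_simp
    linarith
  rw [hv, sign_mul, sign_pos (div_pos (neg_pos.2 ha) hc), one_mul]

theorem sign_eq_of_mul_add_mul_add_mul_eq_zero {a b c u v w : K} (ha : a < 0) (hb : 0 < b)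
    (hc : c < 0) (hw : sign w = sign u) (h : a * u + b * v + c * w = 0) :
    sign v = sign u := by
  have hv : v = b⁻¹ * (-a * u + -c * w) := by
    field_simp
    linarith
  rw [hv, sign_mul, sign_pos (inv_pos.2 hb), one_mul,
    sign_pos_mul_add_pos_mul (neg_pos.2 ha) (neg_pos.2 hc) hw]

end SignPattern

theorem forall_pos_or_forall_neg_of_sign_eq {ι α : Type*} [Zero α] [LinearOrder α]
    {x : ι → α} (i₀ : ι) (hsign : ∀ i, sign (x i) = sign (x i₀)) (hx : x ≠ 0) :
    (∀ i, 0 < x i) ∨ (∀ i, x i < 0) := by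
  have hx₀ : x i₀ ≠ 0 := by
    contrapose! hx
    funext i
    rw [Pi.zero_apply, ← sign_eq_zero_iff, hsign, hx, sign_zero]
  obtain hneg | hpos := hx₀.lt_or_gt
  · exact Or.inr fun i => sign_eq_neg_one_iff.1 ((hsign i).trans (sign_neg hneg))
  · exact Or.inl fun i => sign_eq_one_iff.1 ((hsign i).trans (sign_pos hpos))

theorem statement15_general (A : Matrix (Fin 3) (Fin 3) ℝ)
    (h11 : A 0 0 < 0) (h12 : 0 < A 0 1) (h13 : A 0 2 < 0)
    (h31 : A 2 0 < 0) (h32 : A 2 1 = 0) (h33 : 0 < A 2 2)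
    (x : Fin 3 → ℝ) (hx : x ≠ 0) (hAx : A.mulVec x = 0) :
    (∀ i, 0 < x i) ∨ (∀ i, x i < 0) := by
  have row1 : A 0 0 * x 0 + A 0 1 * x 1 + A 0 2 * x 2 = 0 := by
    simpa [Matrix.mulVec, dotProduct, Fin.sum_univ_three] using congrFun hAx 0
  have row3 : A 2 0 * x 0 + A 2 2 * x 2 = 0 := by
    simpa [Matrix.mulVec, dotProduct, Fin.sum_univ_three, h32] using congrFun hAx 2
  have hsign2 := sign_eq_of_mul_add_mul_eq_zero h31 h33 row3
  have hsign1 := sign_eq_of_mul_add_mul_add_mul_eq_zero h11 h12 h13 hsign2 row1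
  refine forall_pos_or_forall_neg_of_sign_eq 0 (fun i => ?_) hx
  fin_cases i
  exacts [rfl, hsign1, hsign2]

/-- If a real `3×3` matrix `A` has sign pattern
`(− + −; − + ∗; − 0 +)` and `x ≠ 0` satisfies `A x = 0`, then the components of `x`
are either all strictly positive or all strictly negative. -/
theorem statement15 (A : Matrix (Fin 3) (Fin 3) ℝ)
    (h11 : A 0 0 < 0) (h12 : 0 < A 0 1) (h13 : A 0 2 < 0)
    (h21 : A 1 0 < 0) (h22 : 0 < A 1 1)
    (h31 : A 2 0 < 0) (h32 : A 2 1 = 0) (h33 : 0 < A 2 2)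
    (x : Fin 3 → ℝ) (hx : x ≠ 0) (hAx : A.mulVec x = 0) :
    (∀ i, 0 < x i) ∨ (∀ i, x i < 0) :=
  statement15_general A h11 h12 h13 h31 h32 h33 x hx hAx
end
end

section
/- For every r₁₅ ∈ (0, √6/4) there exist r₁₆ and r₄₅ with 1 > r₁₆ > r₄₅ > r₁₅ and a symmetric configuration q₁,…,q₇ in ℝ³ realizing these distance parameters which lies in Ω_H, i.e. satisfying Δ₁₄₅₇ ≤ 0 and H = (R₁₅ − R₄₅)D₁₄₅₆ − (R₄₅ − R₁₆)D₁₄₆₇ = 0. -/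
noncomputable section

open Finset

/-!
Place the regular tetrahedron `q₁q₂q₃q₄` so that its symmetry axis is `ℝ (1, 1, 1)`; the rotation
of order 3 is then the cyclic permutation of coordinates. With `r₁₅ = r` fixed, move `q₅` on the
circle of radius `r` about `q₁` in the mirror plane through `q₁` and the axis, from the edge `q₁q₄`
to the altitude through `q₁`. On the edge `D₁₄₅₆ = 0` and `r₄₅ < r₁₆`, so `H < 0`; on the altitude
`r₄₅ = r₁₆` and, because `r < √6/4`, `r₁₅ < r₄₅`, so `H > 0`. Hence `H` vanishes strictly in
between, and there `H = 0` together with `R₄₅ > R₁₆` forces `R₁₅ > R₄₅`, i.e. `r₁₅ < r₄₅`.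
-/

open Real

section General

variable {n d : ℕ}

lemma rinv_eq_inv_dist_pow (q : Fin n → EuclideanSpace ℝ (Fin d)) (i j : Fin n) :
    Rinv q i j = (dist (q i) (q j) ^ 3)⁻¹ := by
  rw [Rinv, dist_eq_norm]

lemma rinv_lt_rinv {q : Fin n → EuclideanSpace ℝ (Fin d)} {i j k l : Fin n}
    (h₀ : 0 < dist (q i) (q j)) (h : dist (q i) (q j) < dist (q k) (q l)) :
    Rinv q k l < Rinv q i j := by
  rw [rinv_eq_inv_dist_pow, rinv_eq_inv_dist_pow]
  exact inv_strictAnti₀ (by positivity) (pow_lt_pow_left₀ h h₀.le three_ne_zero)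

lemma rinv_le_rinv {q : Fin n → EuclideanSpace ℝ (Fin d)} {i j k l : Fin n}
    (h₀ : 0 < dist (q i) (q j)) (h : dist (q i) (q j) ≤ dist (q k) (q l)) :
    Rinv q k l ≤ Rinv q i j := by
  rw [rinv_eq_inv_dist_pow, rinv_eq_inv_dist_pow]
  exact inv_anti₀ (by positivity) (pow_le_pow_left₀ h₀.le h 3)

lemma continuousAt_rinv {q : Fin n → EuclideanSpace ℝ (Fin d)} {i j : Fin n} (h : q i ≠ q j) :
    ContinuousAt (fun q => Rinv q i j) q :=
  ContinuousAt.inv₀ (by fun_prop) (pow_ne_zero _ (norm_ne_zero_iff.2 (sub_ne_zero.2 h)))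

lemma Continuous.det3 {X : Type*} [TopologicalSpace X] {u v w : X → E3} (hu : Continuous u)
    (hv : Continuous v) (hw : Continuous w) : Continuous fun x => det3 (u x) (v x) (w x) := by
  simp only [_root_.det3, Matrix.det_fin_three]
  fun_prop

lemma continuous_delta (i j h k : Fin n) : Continuous fun q : Fin n → E3 => Delta q i j h k :=
  Continuous.det3 (by fun_prop) (by fun_prop) (by fun_prop)

end General

section Hval

variable {q : Fin 7 → E3}

lemma continuousAt_hval (h04 : q 0 ≠ q 4) (h34 : q 3 ≠ q 4) (h05 : q 0 ≠ q 5) :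
    ContinuousAt Hval q := by
  have := continuous_delta (n := 7) 0 3 4 5
  have := continuous_delta (n := 7) 0 3 5 6
  have := continuousAt_rinv h04
  have := continuousAt_rinv h34
  have := continuousAt_rinv h05
  unfold Hval Dvol
  fun_prop

lemma hval_neg_of_delta_eq_zero (h0345 : Delta q 0 3 4 5 = 0) (h0356 : Delta q 0 3 5 6 ≠ 0)
    (h34 : 0 < dist (q 3) (q 4)) (h : dist (q 3) (q 4) < dist (q 0) (q 5)) : Hval q < 0 := by
  have hR := rinv_lt_rinv h34 h
  rw [Hval, Dvol, Dvol, h0345, abs_zero, mul_zero, zero_sub, neg_lt_zero]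
  exact mul_pos (sub_pos.2 hR) (abs_pos.2 h0356)

lemma hval_pos_of_dist_eq (h0345 : Delta q 0 3 4 5 ≠ 0) (h04 : 0 < dist (q 0) (q 4))
    (h : dist (q 0) (q 4) < dist (q 3) (q 4)) (heq : dist (q 3) (q 4) = dist (q 0) (q 5)) :
    0 < Hval q := by
  have hR := rinv_lt_rinv h04 (h.trans_eq heq)
  have hR' : Rinv q 3 4 = Rinv q 0 5 := by rw [rinv_eq_inv_dist_pow, rinv_eq_inv_dist_pow, heq]
  rw [Hval, Dvol, hR', sub_self, zero_mul, sub_zero]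
  exact mul_pos (sub_pos.2 hR) (abs_pos.2 h0345)

lemma dist_lt_of_hval_eq_zero (hH : Hval q = 0) (h0356 : Delta q 0 3 5 6 ≠ 0)
    (h34 : 0 < dist (q 3) (q 4)) (h : dist (q 3) (q 4) < dist (q 0) (q 5)) :
    dist (q 0) (q 4) < dist (q 3) (q 4) := by
  have h₁ : 0 < (Rinv q 3 4 - Rinv q 0 5) * Dvol q 0 3 5 6 :=
    mul_pos (sub_pos.2 (rinv_lt_rinv h34 h)) (abs_pos.2 h0356)
  have h₂ : 0 < Rinv q 0 4 - Rinv q 3 4 :=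
    pos_of_mul_pos_left (b := Dvol q 0 3 4 5) (by unfold Hval at hH; linarith) (abs_nonneg _)
  by_contra! hle
  exact (rinv_le_rinv h34 hle).not_gt (sub_pos.1 h₂)

end Hval

lemma isSymmetricConfig_of_rotation {q : Fin 7 → E3} (ρ : E3 ≃ᵢ E3)
    (hρ : ρ.trans (ρ.trans ρ) = IsometryEquiv.refl E3)
    (h0 : ρ (q 0) = q 1) (h1 : ρ (q 1) = q 2) (h2 : ρ (q 2) = q 0)
    (h4 : ρ (q 4) = q 5) (h5 : ρ (q 5) = q 6) (h6 : ρ (q 6) = q 4) (h3 : ρ (q 3) = q 3)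
    (h01 : dist (q 0) (q 1) = 1) (h03 : dist (q 0) (q 3) = 1)
    (h56 : dist (q 0) (q 5) = dist (q 0) (q 6)) : IsSymmetricConfig q := by
  have hρd {a b a' b' : E3} (ha : ρ a = a') (hb : ρ b = b') : dist a' b' = dist a b :=
    ha ▸ hb ▸ ρ.dist_eq a b
  have h13 : dist (q 1) (q 3) = 1 := (hρd h0 h3).trans h03
  have h14_16 : dist (q 1) (q 4) = dist (q 1) (q 6) :=
    (hρd h0 h6).trans (h56.symm.trans (hρd h0 h5).symm)
  exact ⟨h01, by rw [dist_comm, ← hρd h2 h0, h01], (hρd h0 h1).trans h01, h03, h13,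
    (hρd h1 h3).trans h13, (hρd h0 h4).symm, (hρd h1 h5).symm, (hρd h3 h4).symm,
    (hρd h3 h5).symm, (hρd h4 h5).symm, (hρd h5 h6).symm.trans (dist_comm _ _), h56,
    (hρd h0 h6).symm, h14_16, (hρd h1 h6).symm,
    (hρd h1 h6).trans (h14_16.symm.trans (hρd h1 h4).symm),
    ρ, hρ, h0, h1, h2, h4, h5, h6, h3⟩

section Coordinates

lemma vec3_sub (a b c a' b' c' : ℝ) :
    !₂[a, b, c] - !₂[a', b', c'] = !₂[a - a', b - b', c - c'] := by
  ext i; fin_cases i <;> rfl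

lemma dist_vec3 (a b c a' b' c' : ℝ) :
    dist !₂[a, b, c] !₂[a', b', c'] = √((a - a') ^ 2 + (b - b') ^ 2 + (c - c') ^ 2) := by
  simp [EuclideanSpace.dist_eq, Fin.sum_univ_three, Real.dist_eq, sq_abs]

lemma det3_vec3 (x₁ y₁ z₁ x₂ y₂ z₂ x₃ y₃ z₃ : ℝ) :
    det3 !₂[x₁, y₁, z₁] !₂[x₂, y₂, z₂] !₂[x₃, y₃, z₃]
      = x₁ * (y₂ * z₃ - z₂ * y₃) - y₁ * (x₂ * z₃ - z₂ * x₃) + z₁ * (x₂ * y₃ - y₂ * x₃) := by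
  simp [det3, Matrix.det_fin_three]; ring

def cyclicRotation : E3 ≃ᵢ E3 :=
  (LinearIsometryEquiv.piLpCongrLeft 2 ℝ ℝ (finRotate 3)).toIsometryEquiv

lemma cyclicRotation_vec3 (a b c : ℝ) : cyclicRotation !₂[a, b, c] = !₂[c, a, b] := by
  ext i; fin_cases i <;> rfl

lemma cyclicRotation_cube :
    cyclicRotation.trans (cyclicRotation.trans cyclicRotation) = IsometryEquiv.refl E3 := by
  ext p i; fin_cases i <;> rfl

end Coordinates

lemma sqrt_two_div_two_sq : (√2 / 2) ^ 2 = 1 / 2 := by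
  rw [div_pow, sq_sqrt zero_le_two]; norm_num

/-- The regular tetrahedron `q₁ q₂ q₃ q₄` of edge `1` has the axis `ℝ (1, 1, 1)`, so the order-3
rotation is a cyclic permutation of coordinates; `q₅ = q₁ + r (x, y/√2, y/√2)` lies in the mirror
plane through `q₁` and the axis, at distance `r` from `q₁` when `x² + y² = 1`. -/
def config (r x y : ℝ) : Fin 7 → E3 :=
  let c := √2 / 2
  ![!₂[c, 0, 0], !₂[0, c, 0], !₂[0, 0, c], !₂[c, c, c],
    !₂[c + r * x, c * r * y, c * r * y], !₂[c * r * y, c + r * x, c * r * y],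
    !₂[c * r * y, c * r * y, c + r * x]]

/-- `q₅ - q₆ = axisOffset r x y • (1, -1, 0)`, so it vanishes exactly when `q₅` is on the axis. -/
def axisOffset (r x y : ℝ) : ℝ := √2 / 2 * (1 - r * y) + r * x

section Config

variable (r x y : ℝ)

lemma isSymmetricConfig_config : IsSymmetricConfig (config r x y) := by
  refine isSymmetricConfig_of_rotation cyclicRotation cyclicRotation_cube ?_ ?_ ?_ ?_ ?_ ?_ ?_
    ?_ ?_ ?_ <;> simp only [config, Matrix.cons_val, cyclicRotation_vec3, dist_vec3]
  · rw [← sqrt_one]; congr 1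
    linear_combination 2 * sqrt_two_div_two_sq
  · rw [← sqrt_one]; congr 1
    linear_combination 2 * sqrt_two_div_two_sq
  · congr 1; ring

lemma delta_config_0345 :
    Delta (config r x y) 0 3 4 5 = -(√2 / 2 * r * x * axisOffset r x y) := by
  simp only [Delta, config, axisOffset, Matrix.cons_val, vec3_sub, det3_vec3]
  ring

lemma delta_config_0356 :
    Delta (config r x y) 0 3 5 6 = -((1 - r * y) * axisOffset r x y) := by
  simp only [Delta, config, axisOffset, Matrix.cons_val, vec3_sub, det3_vec3]
  linear_combination (-2 * (1 - r * y) * (√2 / 2 * (1 - r * y) + r * x)) * sqrt_two_div_two_sq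

lemma delta_config_0346 :
    Delta (config r x y) 0 3 4 6 = √2 / 2 * r * x * axisOffset r x y := by
  simp only [Delta, config, axisOffset, Matrix.cons_val, vec3_sub, det3_vec3]
  ring

variable {r x y}

lemma dist_config_04 (hr : 0 ≤ r) (hxy : x ^ 2 + y ^ 2 = 1) :
    dist (config r x y 0) (config r x y 4) = r := by
  simp only [config, Matrix.cons_val, dist_vec3]
  rw [sqrt_eq_iff_mul_self_eq (by positivity) hr]
  linear_combination r ^ 2 * hxy + 2 * r ^ 2 * y ^ 2 * sqrt_two_div_two_sq

lemma dist_config_34_sq (hxy : x ^ 2 + y ^ 2 = 1) :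
    dist (config r x y 3) (config r x y 4) ^ 2 = 1 + r ^ 2 - 2 * r * y := by
  simp only [config, Matrix.cons_val, dist_vec3]
  rw [sq_sqrt (by positivity)]
  linear_combination r ^ 2 * hxy + (2 - 4 * r * y + 2 * r ^ 2 * y ^ 2) * sqrt_two_div_two_sq

lemma dist_config_05_sq (hxy : x ^ 2 + y ^ 2 = 1) :
    dist (config r x y 0) (config r x y 5) ^ 2 = 1 + r ^ 2 - r * y + √2 * r * x := by
  simp only [config, Matrix.cons_val, dist_vec3]
  rw [sq_sqrt (by positivity)]
  linear_combination r ^ 2 * hxy + (2 - 2 * r * y + 2 * r ^ 2 * y ^ 2) * sqrt_two_div_two_sq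

end Config

/-- For `0 ≤ s ≤ √3/3` the point `q₅` runs from the edge `q₁q₄` (`s = 0`) to the altitude of the
tetrahedron through `q₁` (`s = √3/3`). -/
def arcConfig (r s : ℝ) : Fin 7 → E3 := config r (-s) √(1 - s ^ 2)

lemma continuous_arcConfig (r : ℝ) : Continuous (arcConfig r) := by
  refine continuous_pi fun i => ?_
  fin_cases i <;> simp only [arcConfig, config] <;> fun_prop

section Arc

variable {r s : ℝ}

lemma sq_lt_of_lt_sqrt_six_div_four (hr0 : 0 < r) (hr : r < √6 / 4) : r ^ 2 < 3 / 8 := by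
  nlinarith [sq_sqrt (show (0 : ℝ) ≤ 6 by norm_num)]

lemma neg_sq_add_sqrt_one_sub_sq (hs : s ^ 2 ≤ 1) : (-s) ^ 2 + √(1 - s ^ 2) ^ 2 = 1 := by
  rw [sq_sqrt (by linarith)]; ring

lemma sqrt_two_mul_le_sqrt_one_sub_sq (hs0 : 0 ≤ s) (hs : 3 * s ^ 2 ≤ 1) :
    √2 * s ≤ √(1 - s ^ 2) := by
  rw [le_sqrt (by positivity) (by linarith), mul_pow, sq_sqrt zero_le_two]; linarith

lemma sqrt_two_mul_lt_sqrt_one_sub_sq (hs0 : 0 ≤ s) (hs : 3 * s ^ 2 < 1) :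
    √2 * s < √(1 - s ^ 2) := by
  rw [lt_sqrt (by positivity), mul_pow, sq_sqrt zero_le_two]; linarith

lemma arc_axisOffset_pos (hr0 : 0 < r) (hr : r < √6 / 4) (hs : 3 * s ^ 2 ≤ 1) :
    0 < axisOffset r (-s) √(1 - s ^ 2) := by
  rw [axisOffset]
  have hc : (√2 / 2) ^ 2 = 1 / 2 := sqrt_two_div_two_sq
  have hc0 : 0 < √2 / 2 := by positivity
  set c := √2 / 2
  have hy : √(1 - s ^ 2) ^ 2 = 1 - s ^ 2 := sq_sqrt (by linarith)
  have hy0 : 0 ≤ √(1 - s ^ 2) := sqrt_nonneg _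
  set y := √(1 - s ^ 2)
  have hr2 := sq_lt_of_lt_sqrt_six_div_four hr0 hr
  -- `c y + s` is largest at the end `s = √3/3` of the arc, where it equals `2/√3`
  have hcys : 2 * c * y * s ≤ 5 / 6 - s ^ 2 / 2 := by
    refine le_of_sq_le_sq ?_ (by linarith)
    have h2cys : (2 * c * y * s) ^ 2 = 2 * (1 - s ^ 2) * s ^ 2 := by
      linear_combination (4 * y ^ 2 * s ^ 2) * hc + 2 * s ^ 2 * hy
    rw [h2cys]
    nlinarith [mul_nonneg (show 0 ≤ 1 / 3 - s ^ 2 by linarith)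
      (show 0 ≤ 25 / 27 - s ^ 2 by linarith)]
  have hsum : (c * y + s) ^ 2 ≤ 4 / 3 := by nlinarith
  have hbound : (r * (c * y + s)) ^ 2 < c ^ 2 := by
    rw [mul_pow]; nlinarith [sq_nonneg (c * y + s)]
  have := (abs_lt.1 (abs_lt_of_sq_lt_sq hbound hc0.le)).2
  linarith

lemma arc_mul_sqrt_lt_one (hr0 : 0 < r) (hr : r < √6 / 4) :
    r * √(1 - s ^ 2) < 1 := by
  have := sq_lt_of_lt_sqrt_six_div_four hr0 hr
  have : √(1 - s ^ 2) ≤ 1 := sqrt_le_one.2 (by nlinarith)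
  nlinarith

lemma arc_dist_04 (hr0 : 0 < r) (hs : 3 * s ^ 2 ≤ 1) :
    dist (arcConfig r s 0) (arcConfig r s 4) = r :=
  dist_config_04 hr0.le (neg_sq_add_sqrt_one_sub_sq (by linarith [hs]))

lemma arc_dist_34_pos (hr0 : 0 < r) (hr : r < √6 / 4) (hs : 3 * s ^ 2 ≤ 1) :
    0 < dist (arcConfig r s 3) (arcConfig r s 4) := by
  have h := dist_config_34_sq (r := r) (neg_sq_add_sqrt_one_sub_sq (by linarith : s ^ 2 ≤ 1))
  have := arc_mul_sqrt_lt_one (s := s) hr0 hr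
  refine lt_of_pow_lt_pow_left₀ 2 dist_nonneg ?_
  rw [arcConfig, h, zero_pow two_ne_zero]
  have hy : √(1 - s ^ 2) ^ 2 = 1 - s ^ 2 := sq_sqrt (by linarith)
  nlinarith [sq_nonneg (r * s), sq_pos_of_pos (sub_pos.2 this)]

lemma arc_dist_05_sq_sub_dist_34_sq (hs : 3 * s ^ 2 ≤ 1) :
    dist (arcConfig r s 0) (arcConfig r s 5) ^ 2 - dist (arcConfig r s 3) (arcConfig r s 4) ^ 2
      = r * (√(1 - s ^ 2) - √2 * s) := by
  have hxy := neg_sq_add_sqrt_one_sub_sq (show s ^ 2 ≤ 1 by linarith)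
  rw [arcConfig, dist_config_05_sq hxy, dist_config_34_sq hxy]
  ring

lemma arc_dist_34_lt_05 (hr0 : 0 < r) (hs0 : 0 ≤ s) (hs : 3 * s ^ 2 < 1) :
    dist (arcConfig r s 3) (arcConfig r s 4) < dist (arcConfig r s 0) (arcConfig r s 5) := by
  have h := arc_dist_05_sq_sub_dist_34_sq (r := r) hs.le
  have := mul_pos hr0 (sub_pos.2 (sqrt_two_mul_lt_sqrt_one_sub_sq hs0 hs))
  exact (pow_lt_pow_iff_left₀ dist_nonneg dist_nonneg two_ne_zero).1 (by linarith)

lemma arc_dist_05_lt_one (hr0 : 0 < r) (hr : r < √6 / 4) (hs0 : 0 ≤ s) (hs : 3 * s ^ 2 ≤ 1) :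
    dist (arcConfig r s 0) (arcConfig r s 5) < 1 := by
  have hy : r < √(1 - s ^ 2) := by
    rw [lt_sqrt hr0.le]; nlinarith [sq_lt_of_lt_sqrt_six_div_four hr0 hr]
  refine (pow_lt_one_iff_of_nonneg dist_nonneg two_ne_zero).1 ?_
  rw [arcConfig, dist_config_05_sq (neg_sq_add_sqrt_one_sub_sq (by linarith))]
  nlinarith [mul_nonneg (mul_nonneg (sqrt_nonneg 2) hr0.le) hs0]

lemma arc_delta_0346_nonpos (hr0 : 0 < r) (hr : r < √6 / 4) (hs0 : 0 ≤ s)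
    (hs : 3 * s ^ 2 ≤ 1) :
    Delta (arcConfig r s) 0 3 4 6 ≤ 0 := by
  rw [arcConfig, delta_config_0346, mul_neg]
  have := arc_axisOffset_pos hr0 hr hs
  nlinarith [mul_nonneg (mul_nonneg (sqrt_nonneg 2) hr0.le) hs0]

lemma arc_delta_0356_ne_zero (hr0 : 0 < r) (hr : r < √6 / 4) (hs : 3 * s ^ 2 ≤ 1) :
    Delta (arcConfig r s) 0 3 5 6 ≠ 0 := by
  rw [arcConfig, delta_config_0356, neg_ne_zero]
  have := arc_mul_sqrt_lt_one (s := s) hr0 hr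
  exact (mul_pos (by linarith) (arc_axisOffset_pos hr0 hr hs)).ne'

lemma arc_delta_0345_ne_zero (hr0 : 0 < r) (hr : r < √6 / 4) (hs0 : 0 < s)
    (hs : 3 * s ^ 2 ≤ 1) :
    Delta (arcConfig r s) 0 3 4 5 ≠ 0 := by
  rw [arcConfig, delta_config_0345, neg_ne_zero, mul_neg]
  exact mul_ne_zero (neg_ne_zero.2 (by positivity)) (arc_axisOffset_pos hr0 hr hs).ne'

end Arc

section Endpoints

variable {r : ℝ}

lemma three_mul_sq_sqrt_three_div_three : 3 * (√3 / 3) ^ 2 = 1 := by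
  rw [div_pow, sq_sqrt zero_le_three]; norm_num

lemma three_mul_sq_lt_one {s : ℝ} (hs0 : 0 ≤ s) (hs : s < √3 / 3) : 3 * s ^ 2 < 1 := by
  nlinarith [three_mul_sq_sqrt_three_div_three]

lemma sqrt_one_sub_sq_sqrt_three_div_three : √(1 - (√3 / 3) ^ 2) = √2 * (√3 / 3) := by
  rw [show 1 - (√3 / 3) ^ 2 = (√2 * (√3 / 3)) ^ 2 by
    rw [mul_pow, div_pow, sq_sqrt zero_le_two, sq_sqrt zero_le_three]; norm_num]
  exact sqrt_sq (by positivity)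

lemma hval_arcConfig_zero_neg (hr0 : 0 < r) (hr : r < √6 / 4) : Hval (arcConfig r 0) < 0 :=
  hval_neg_of_delta_eq_zero (by rw [arcConfig, delta_config_0345]; simp)
    (arc_delta_0356_ne_zero hr0 hr (by norm_num)) (arc_dist_34_pos hr0 hr (by norm_num))
    (arc_dist_34_lt_05 hr0 le_rfl (by norm_num))

lemma hval_arcConfig_end_pos (hr0 : 0 < r) (hr : r < √6 / 4) :
    0 < Hval (arcConfig r (√3 / 3)) := by
  have hs := three_mul_sq_sqrt_three_div_three.le
  have h04 := arc_dist_04 hr0 hs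
  have hsub := arc_dist_05_sq_sub_dist_34_sq (r := r) hs
  rw [sqrt_one_sub_sq_sqrt_three_div_three, sub_self, mul_zero, sub_eq_zero] at hsub
  refine hval_pos_of_dist_eq (arc_delta_0345_ne_zero hr0 hr (by positivity) hs)
    (hr0.trans_eq h04.symm) ?_ ((sq_eq_sq₀ dist_nonneg dist_nonneg).1 hsub).symm
  refine (pow_lt_pow_iff_left₀ dist_nonneg dist_nonneg two_ne_zero).1 ?_
  have hy : (√2 * (√3 / 3)) ^ 2 = 2 / 3 := by
    rw [mul_pow, div_pow, sq_sqrt zero_le_two, sq_sqrt zero_le_three]; norm_num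
  rw [h04, arcConfig, dist_config_34_sq (neg_sq_add_sqrt_one_sub_sq (by linarith)),
    sqrt_one_sub_sq_sqrt_three_div_three]
  nlinarith [sq_lt_of_lt_sqrt_six_div_four hr0 hr, sq_nonneg (2 * r * (√2 * (√3 / 3)) - 1)]

end Endpoints

lemma continuousOn_hval_arcConfig {r : ℝ} (hr0 : 0 < r) (hr : r < √6 / 4) :
    ContinuousOn (fun s => Hval (arcConfig r s)) (Set.Icc 0 (√3 / 3)) := by
  intro s ⟨hs0, hs⟩
  have hs' : 3 * s ^ 2 ≤ 1 := by nlinarith [three_mul_sq_sqrt_three_div_three]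
  have h34 := arc_dist_34_pos hr0 hr hs'
  have h05 : 0 < dist (arcConfig r s 0) (arcConfig r s 5) := by
    refine h34.trans_le ((pow_le_pow_iff_left₀ dist_nonneg dist_nonneg two_ne_zero).1 ?_)
    nlinarith [arc_dist_05_sq_sub_dist_34_sq (r := r) hs',
      sqrt_two_mul_le_sqrt_one_sub_sq hs0 hs']
  have h04 : 0 < dist (arcConfig r s 0) (arcConfig r s 4) :=
    hr0.trans_eq (arc_dist_04 hr0 hs').symm
  exact (continuousAt_hval (dist_pos.1 h04) (dist_pos.1 h34) (dist_pos.1 h05)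
    ).comp_continuousWithinAt (continuous_arcConfig r).continuousWithinAt

lemma exists_arcConfig_hval_eq_zero {r : ℝ} (hr0 : 0 < r) (hr : r < √6 / 4) :
    ∃ s ∈ Set.Ioo 0 (√3 / 3), Hval (arcConfig r s) = 0 :=
  intermediate_value_Ioo (by positivity) (continuousOn_hval_arcConfig hr0 hr)
    ⟨hval_arcConfig_zero_neg hr0 hr, hval_arcConfig_end_pos hr0 hr⟩

/-- For every `r₁₅ ∈ (0, √6/4)` there exist `r₁₆`, `r₄₅` with
`1 > r₁₆ > r₄₅ > r₁₅` and a symmetric configuration realizing these distance parameters which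
lies in `Ω_H`, i.e. with `Δ₁₄₅₇ ≤ 0` and `H = 0`. -/
theorem statement16 (r15 : ℝ) (hr0 : 0 < r15) (hr1 : r15 < Real.sqrt 6 / 4) :
    ∃ r16 r45 : ℝ, r16 < 1 ∧ r45 < r16 ∧ r15 < r45 ∧
      ∃ q : Fin 7 → E3, IsSymmetricConfig q ∧
        dist (q 0) (q 4) = r15 ∧ dist (q 0) (q 5) = r16 ∧ dist (q 3) (q 4) = r45 ∧
        Delta q 0 3 4 6 ≤ 0 ∧ Hval q = 0 := by
  obtain ⟨s, ⟨hs0, hs⟩, hH⟩ := exists_arcConfig_hval_eq_zero hr0 hr1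
  have hs' := three_mul_sq_lt_one hs0.le hs
  have h04 := arc_dist_04 hr0 hs'.le
  have h34 := arc_dist_34_pos hr0 hr1 hs'.le
  have h3405 := arc_dist_34_lt_05 hr0 hs0.le hs'
  have h0434 := dist_lt_of_hval_eq_zero hH (arc_delta_0356_ne_zero hr0 hr1 hs'.le) h34 h3405
  exact ⟨_, _, arc_dist_05_lt_one hr0 hr1 hs0.le hs'.le, h3405, h04.symm.trans_lt h0434,
    arcConfig r15 s, isSymmetricConfig_config _ _ _, h04, rfl, rfl,
    arc_delta_0346_nonpos hr0 hr1 hs0.le hs'.le, hH⟩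
end
end

section
/- Let q₁,…,q₇ in ℝ³ be a symmetric configuration with r₁₅ ∈ (0, √6/4) and 1 > r₁₆ > r₄₅ > r₁₅, and set H = (R₁₅ − R₄₅)D₁₄₅₆ − (R₄₅ − R₁₆)D₁₄₆₇. (a) If D₁₄₅₆ = 0 (equivalently Δ₁₄₅₇ = 0) and D₁₄₆₇ > 0, then H < 0. (b) If instead the configuration satisfies r₁₅ < r₄₅ = r₁₆ < 1 and D₁₄₅₆ > 0, then H > 0. -/
noncomputable section

open Finset

section Rinv

variable {n d : ℕ} (q : Fin n → EuclideanSpace ℝ (Fin d))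

lemma Rinv_eq_inv_dist_pow (i j : Fin n) : Rinv q i j = (dist (q i) (q j) ^ 3)⁻¹ := by
  rw [Rinv, dist_eq_norm]

variable {i j k l : Fin n}

lemma Rinv_lt_Rinv_of_dist_lt (h0 : 0 < dist (q i) (q j))
    (h : dist (q i) (q j) < dist (q k) (q l)) : Rinv q k l < Rinv q i j := by
  rw [Rinv_eq_inv_dist_pow, Rinv_eq_inv_dist_pow]
  exact inv_strictAnti₀ (pow_pos h0 3) (pow_lt_pow_left₀ h h0.le three_ne_zero)

lemma Rinv_eq_Rinv_of_dist_eq (h : dist (q i) (q j) = dist (q k) (q l)) :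
    Rinv q i j = Rinv q k l := by
  rw [Rinv_eq_inv_dist_pow, Rinv_eq_inv_dist_pow, h]

end Rinv

lemma Hval_eq_of_Dvol_eq_zero {q : Fin 7 → E3} (hD : Dvol q 0 3 4 5 = 0) :
    Hval q = -((Rinv q 3 4 - Rinv q 0 5) * Dvol q 0 3 5 6) := by
  rw [Hval, hD]; ring

lemma Hval_eq_of_Rinv_eq {q : Fin 7 → E3} (hR : Rinv q 3 4 = Rinv q 0 5) :
    Hval q = (Rinv q 0 4 - Rinv q 3 4) * Dvol q 0 3 4 5 := by
  rw [Hval, hR]; ring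

theorem statement19_general (q : Fin 7 → E3)
    (hr0 : 0 < dist (q 0) (q 4)) :
    ((dist (q 0) (q 5) < 1 → dist (q 3) (q 4) < dist (q 0) (q 5) →
      dist (q 0) (q 4) < dist (q 3) (q 4) →
      Dvol q 0 3 4 5 = 0 → 0 < Dvol q 0 3 5 6 → Hval q < 0)) ∧
    ((dist (q 0) (q 4) < dist (q 3) (q 4) → dist (q 3) (q 4) = dist (q 0) (q 5) →
      dist (q 0) (q 5) < 1 →
      0 < Dvol q 0 3 4 5 → 0 < Hval q)) := by
  constructor
  · intro _ h45_lt_16 h15_lt_45 hD₁ hD₂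
    have hR : Rinv q 0 5 < Rinv q 3 4 :=
      Rinv_lt_Rinv_of_dist_lt q (hr0.trans h15_lt_45) h45_lt_16
    rw [Hval_eq_of_Dvol_eq_zero hD₁, neg_lt_zero]
    exact mul_pos (sub_pos.mpr hR) hD₂
  · intro h15_lt_45 h45_eq_16 _ hD
    rw [Hval_eq_of_Rinv_eq (Rinv_eq_Rinv_of_dist_eq q h45_eq_16)]
    exact mul_pos (sub_pos.mpr (Rinv_lt_Rinv_of_dist_lt q hr0 h15_lt_45)) hD

/-- For a symmetric configuration with `r₁₅ ∈ (0, √6/4)`: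
(a) if `1 > r₁₆ > r₄₅ > r₁₅`, `D₁₄₅₆ = 0` and `D₁₄₆₇ > 0`, then `H < 0`;
(b) if instead `r₁₅ < r₄₅ = r₁₆ < 1` and `D₁₄₅₆ > 0`, then `H > 0`. -/
theorem statement19 (q : Fin 7 → E3) (hsym : IsSymmetricConfig q)
    (hr0 : 0 < dist (q 0) (q 4)) (hr1 : dist (q 0) (q 4) < Real.sqrt 6 / 4) :
    ((dist (q 0) (q 5) < 1 → dist (q 3) (q 4) < dist (q 0) (q 5) →
      dist (q 0) (q 4) < dist (q 3) (q 4) →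
      Dvol q 0 3 4 5 = 0 → 0 < Dvol q 0 3 5 6 → Hval q < 0)) ∧
    ((dist (q 0) (q 4) < dist (q 3) (q 4) → dist (q 3) (q 4) = dist (q 0) (q 5) →
      dist (q 0) (q 5) < 1 →
      0 < Dvol q 0 3 4 5 → 0 < Hval q)) :=
  statement19_general q hr0
end
end
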